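/- arXiv:math/0410481 — 10 statements merged into one kernel-verified Lean document; each statement's English description precedes it below -/
import Mathlib

section
/- Every U-cycle is a T-cycle. Precisely: if x ∈ ℝ with x ≥ 1 and there exists l ∈ ℕ with l ≥ 1 such that U^l(x) = x, then x is a positive integer (so the cycle (x, U(x), …, U^l(x)) consists entirely of positive integers and is a cycle of the 3n+1 function T). -/
/-! Let `a` be the number of odd steps among the first `k` steps of the orbit of `x`. Then
`3^a x ≤ 2^k U^k(x)`, while `2^k frac(U^k x) ≤ 3^a frac(x)`, because halving and the map
`y ↦ (3y+1)/2` scale the fractional part by at most `1/2` and `3/2`, modulo `1`.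
On a cycle of length `l` the first inequality gives `3^a ≤ 2^l`. If `frac x > 0`, the second
gives `2^l ≤ 3^a`, and `2^l = 3^a` is impossible for `l ≥ 1`. -/

/-- The real 3x+1 function: `Ux = x/2` if `⌊x⌋` is even, `(3x+1)/2` if `⌊x⌋` is odd. -/
noncomputable def U (x : ℝ) : ℝ := if Even ⌊x⌋ then x / 2 else (3 * x + 1) / 2

theorem Int.fract_le_sub_intCast {R : Type*} [Ring R] [LinearOrder R] [IsStrictOrderedRing R]
    [FloorRing R] {z : R} {n : ℤ} (h : (n : R) ≤ z) : Int.fract z ≤ z - n := by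
  rw [Int.fract, sub_le_sub_iff_left]
  exact_mod_cast Int.le_floor.mpr h

theorem exists_pow_three_mul_le_two_mul_U (y : ℝ) :
    ∃ b : ℕ, 3 ^ b * y ≤ 2 * U y ∧ 2 * Int.fract (U y) ≤ 3 ^ b * Int.fract y := by
  have hy := Int.floor_add_fract y
  by_cases h : Even ⌊y⌋
  · have hU : U y = y / 2 := if_pos h
    obtain ⟨m, hm⟩ := h
    have hm' : (⌊y⌋ : ℝ) = 2 * m := by rw [hm]; push_cast; ring
    have hfract : Int.fract (y / 2) ≤ y / 2 - m := Int.fract_le_sub_intCast (by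
      linarith [Int.fract_nonneg y])
    refine ⟨0, ?_, ?_⟩ <;> rw [hU] <;> linarith
  · have hU : U y = (3 * y + 1) / 2 := if_neg h
    obtain ⟨m, hm⟩ := Int.not_even_iff_odd.mp h
    have hm' : (⌊y⌋ : ℝ) = 2 * m + 1 := by rw [hm]; push_cast; ring
    have hfract : Int.fract ((3 * y + 1) / 2) ≤ (3 * y + 1) / 2 - ((3 * m + 2 : ℤ) : ℝ) :=
      Int.fract_le_sub_intCast (by push_cast; linarith [Int.fract_nonneg y])
    push_cast at hfract
    refine ⟨1, ?_, ?_⟩ <;> rw [hU] <;> linarith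

theorem exists_pow_three_mul_le_iterate_U (x : ℝ) (k : ℕ) :
    ∃ a : ℕ, 3 ^ a * x ≤ 2 ^ k * U^[k] x ∧
      2 ^ k * Int.fract (U^[k] x) ≤ 3 ^ a * Int.fract x := by
  induction k with
  | zero => exact ⟨0, by simp, by simp⟩
  | succ k ih =>
    obtain ⟨a, hx, hfract⟩ := ih
    obtain ⟨b, hy, hfract'⟩ := exists_pow_three_mul_le_two_mul_U (U^[k] x)
    refine ⟨b + a, ?_, ?_⟩ <;> rw [Function.iterate_succ_apply']
    · calc 3 ^ (b + a) * x = 3 ^ b * (3 ^ a * x) := by ring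
        _ ≤ 3 ^ b * (2 ^ k * U^[k] x) := by gcongr
        _ = 2 ^ k * (3 ^ b * U^[k] x) := by ring
        _ ≤ 2 ^ k * (2 * U (U^[k] x)) := by gcongr
        _ = 2 ^ (k + 1) * U (U^[k] x) := by ring
    · calc 2 ^ (k + 1) * Int.fract (U (U^[k] x))
          = 2 ^ k * (2 * Int.fract (U (U^[k] x))) := by ring
        _ ≤ 2 ^ k * (3 ^ b * Int.fract (U^[k] x)) := by gcongr
        _ = 3 ^ b * (2 ^ k * Int.fract (U^[k] x)) := by ring
        _ ≤ 3 ^ b * (3 ^ a * Int.fract x) := by gcongr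
        _ = 3 ^ (b + a) * Int.fract x := by ring

theorem two_pow_ne_three_pow {l : ℕ} (hl : l ≠ 0) (a : ℕ) : 2 ^ l ≠ 3 ^ a := by
  intro h
  have heven : Even (2 ^ l) := (Nat.even_pow' hl).mpr even_two
  rw [h] at heven
  exact Nat.not_even_iff_odd.mpr (Odd.pow (by decide)) heven

/-- Every `U`-cycle is a `T`-cycle: any real `x ≥ 1` with `U^[l] x = x` for some `l ≥ 1`
is a positive integer. -/
theorem U_cycles_are_T_cycles (x : ℝ) (hx : 1 ≤ x) (l : ℕ) (hl : 1 ≤ l)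
    (hcyc : U^[l] x = x) : ∃ n : ℕ, 0 < n ∧ x = n := by
  obtain ⟨a, hgrowth, hfract⟩ := exists_pow_three_mul_le_iterate_U x l
  rw [hcyc] at hgrowth hfract
  have hle : (3 : ℝ) ^ a ≤ 2 ^ l := le_of_mul_le_mul_right hgrowth (by linarith)
  have hfract_zero : Int.fract x = 0 := by
    by_contra hne
    have hge : (2 : ℝ) ^ l ≤ 3 ^ a :=
      le_of_mul_le_mul_right hfract ((Int.fract_nonneg x).lt_of_ne' hne)
    exact two_pow_ne_three_pow (Nat.one_le_iff_ne_zero.mp hl) a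
      (by exact_mod_cast le_antisymm hge hle)
  refine ⟨⌊x⌋₊, Nat.floor_pos.mpr hx, ?_⟩
  rw [natCast_floor_eq_intCast_floor (by linarith)]
  linarith [Int.floor_add_fract x]
end

section
/- If a rational Collatz cycle is not the zero cycle (0, 0, …), then its elements are either all strictly positive or all strictly negative. Precisely: if r ∈ ℚ[(2)], l ≥ 1, g^l(r) = r, and r ≠ 0, then either g^i(r) > 0 for all i, or g^i(r) < 0 for all i. -/
/-- The rational Collatz function on `ℚ[(2)]` (rationals with odd denominator):
`g r = r/2` if the numerator of `r` is even, `(3r+1)/2` otherwise. -/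
def gQ (r : ℚ) : ℚ := if Even r.num then r / 2 else (3 * r + 1) / 2

open Function Set

theorem Function.IsPeriodicPt.mem_of_iterate_mem {α : Type*} {f : α → α} {s : Set α}
    (hs : MapsTo f s s) {n : ℕ} {x : α} (hx : IsPeriodicPt f n x) (hn : 0 < n) {i : ℕ}
    (hi : f^[i] x ∈ s) : x ∈ s := by
  have hle : i ≤ n * (i + 1) := by nlinarith
  have hreturn : f^[n * (i + 1) - i] (f^[i] x) = x := by
    rw [← iterate_add_apply, Nat.sub_add_cancel hle]
    exact (hx.mul_const (i + 1)).eq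
  exact hreturn ▸ hs.iterate _ hi

theorem gQ_mapsTo_Ioi : MapsTo gQ (Ioi 0) (Ioi 0) := fun r (hr : 0 < r) => by
  show 0 < gQ r
  unfold gQ; split <;> linarith

theorem gQ_mapsTo_Ici : MapsTo gQ (Ici 0) (Ici 0) := fun r (hr : 0 ≤ r) => by
  show 0 ≤ gQ r
  unfold gQ; split <;> linarith

theorem ratCollatzCycle_sign_general (r : ℚ) (l : ℕ) (hl : 1 ≤ l)
    (hcyc : gQ^[l] r = r) (hne : r ≠ 0) :
    (∀ i : ℕ, 0 < gQ^[i] r) ∨ (∀ i : ℕ, gQ^[i] r < 0) := by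
  rcases hne.lt_or_gt with hneg | hpos
  · refine Or.inr fun i => ?_
    by_contra! hnonneg
    have hr : r ∈ Ici 0 :=
      IsPeriodicPt.mem_of_iterate_mem (f := gQ) gQ_mapsTo_Ici hcyc hl hnonneg
    exact (not_le.mpr hneg) hr
  · exact Or.inl fun i => gQ_mapsTo_Ioi.iterate i (mem_Ioi.mpr hpos)

/-- A nonzero rational Collatz cycle has either all elements strictly positive
or all elements strictly negative. -/
theorem ratCollatzCycle_sign (r : ℚ) (hden : Odd r.den) (l : ℕ) (hl : 1 ≤ l)
    (hcyc : gQ^[l] r = r) (hne : r ≠ 0) :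
    (∀ i : ℕ, 0 < gQ^[i] r) ∨ (∀ i : ℕ, gQ^[i] r < 0) :=
  ratCollatzCycle_sign_general r l hl hcyc hne
end

section
/- A sequence (x₀, x₁, …, x_l) of real numbers (l ≥ 1) is a rational Collatz cycle of length l if, and only if, it is a pseudo-cycle of length l. In particular, every pseudo-cycle consists of rational numbers with odd denominators, and the branch g_{s_i} used at each step agrees with the parity of the current term. -/
private def Pden (k : ℕ) (q : ℚ) : Prop :=
  ∃ a b : ℤ, Odd a ∧ Odd b ∧ q = (a : ℚ) / ((2:ℚ)^k * (b:ℚ))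

private lemma oddden_of_eq_div {q : ℚ} {a b : ℤ} (hb : Odd b) (h : q = (a : ℚ) / b) :
    Odd q.den := by
  have h1 : q = Rat.divInt a b := by rw [Rat.divInt_eq_div]; exact h
  have h2 : ((Rat.divInt a b).den : ℤ) ∣ b := Rat.den_dvd a b
  rw [← h1] at h2
  rcases Int.even_or_odd (q.den : ℤ) with he | ho
  · exfalso
    have h3 : (2:ℤ) ∣ b := he.two_dvd.trans h2
    have : Even b := by rcases h3 with ⟨c, hc⟩; exact ⟨c, by omega⟩
    exact (Int.not_odd_iff_even.2 this) hb
  · exact_mod_cast ho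

private lemma cross_mul {q : ℚ} {a b : ℤ} (hb : (b:ℚ) ≠ 0) (h : q = (a : ℚ) / b) :
    q.num * b = a * q.den := by
  have h2 : (q.num : ℚ) / (q.den : ℚ) = (a : ℚ) / b := by rw [Rat.num_div_den]; exact h
  have hd : ((q.den : ℚ)) ≠ 0 := by exact_mod_cast q.den_ne_zero
  rw [div_eq_div_iff hd hb] at h2
  exact_mod_cast h2


private lemma odd_int_ne_zero {b : ℤ} (hb : Odd b) : b ≠ 0 := by
  rcases hb with ⟨c, hc⟩; omega

private lemma Pden.den_not_odd {k : ℕ} {q : ℚ} (hk : 1 ≤ k) (h : Pden k q) :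
    ¬ Odd q.den := by
  rcases h with ⟨a, b, ha, hb, heq⟩
  intro hod
  set b' : ℤ := 2^k * b with hb'
  have hcast : ((b' : ℤ) : ℚ) = (2:ℚ)^k * (b:ℚ) := by push_cast [hb']; ring
  have hb0 : ((b' : ℤ) : ℚ) ≠ 0 := by
    rw [hcast]
    have : (b:ℚ) ≠ 0 := by exact_mod_cast odd_int_ne_zero hb
    positivity
  have hcross : q.num * b' = a * q.den := cross_mul hb0 (by rw [hcast]; exact heq)
  have heven : Even (q.num * b') := by
    refine Even.mul_left ?_ _
    rw [hb']
    exact (Even.mul_right ⟨2^(k-1), by rw [← two_mul, ← pow_succ']; congr 1; omega⟩ b)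
  rw [hcross] at heven
  rcases Int.even_mul.1 heven with h1 | h1
  · exact (Int.not_odd_iff_even.2 h1) ha
  · exact (Int.not_odd_iff_even.2 h1) (by exact_mod_cast hod)

private lemma Pden.step {k : ℕ} {q : ℚ} (hk : 1 ≤ k) (h : Pden k q) (b : Bool) :
    Pden (k+1) (if b then (3*q+1)/2 else q/2) := by
  rcases h with ⟨a, c, ha, hc, heq⟩
  have hc0 : (c:ℚ) ≠ 0 := by exact_mod_cast odd_int_ne_zero hc
  have h2k : ((2:ℚ)^k) ≠ 0 := by positivity
  cases b with
  | false =>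
    refine ⟨a, c, ha, hc, ?_⟩
    simp only [Bool.false_eq_true, if_false]
    rw [heq, div_div]
    congr 1
    push_cast
    ring
  | true =>
    refine ⟨3*a + 2^k*c, c, ?_, hc, ?_⟩
    · have h1 : Odd (3*a) := by
        rcases ha with ⟨m, hm⟩; exact ⟨3*m+1, by omega⟩
      have h2 : Even ((2:ℤ)^k*c) := by
        refine Even.mul_right ⟨2^(k-1), by rw [← two_mul, ← pow_succ']; congr 1; omega⟩ c
      exact h1.add_even h2
    · simp only [if_true]
      rw [heq, div_eq_div_iff (by positivity) (by positivity)]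
      push_cast
      field_simp
      ring

private lemma pden_of_not_odd_den {q : ℚ} (h : ¬ Odd q.den) : ∃ k, 1 ≤ k ∧ Pden k q := by
  obtain ⟨k, m, hm, hden⟩ := Nat.exists_eq_two_pow_mul_odd q.den_nz
  have hk : 1 ≤ k := by
    by_contra hk0
    have : k = 0 := by omega
    rw [this] at hden; simp at hden
    exact h (hden ▸ hm)
  have hnum : Odd q.num := by
    rcases Int.even_or_odd q.num with he | ho
    · exfalso
      have h2n : 2 ∣ q.num.natAbs := by
        rcases he with ⟨c, hc⟩
        exact ⟨c.natAbs, by rw [hc]; rw [← two_mul]; exact (Int.natAbs_mul 2 c) ▸ rfl⟩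
      have h2d : 2 ∣ q.den := by rw [hden]; exact Dvd.dvd.mul_right (dvd_pow_self 2 (by omega)) m
      have := Nat.Coprime.eq_one_of_dvd (q.reduced.coprime_dvd_left h2n) h2d
      omega
    · exact ho
  refine ⟨k, hk, q.num, m, hnum, by exact_mod_cast hm, ?_⟩
  conv_lhs => rw [← Rat.num_div_den q]
  rw [hden]
  push_cast
  ring

private lemma pden_ne {k j : ℕ} {q : ℚ} (hkj : k < j) (h1 : Pden k q) (h2 : Pden j q) :
    False := by
  rcases h1 with ⟨a, b, ha, hb, he1⟩
  rcases h2 with ⟨a', b', ha', hb', he2⟩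
  have hb0 : (b:ℚ) ≠ 0 := by exact_mod_cast odd_int_ne_zero hb
  have hb'0 : (b':ℚ) ≠ 0 := by exact_mod_cast odd_int_ne_zero hb'
  have h2k : ((2:ℚ)^k) ≠ 0 := by positivity
  have h2j : ((2:ℚ)^j) ≠ 0 := by positivity
  have hq : (a : ℚ) / ((2:ℚ)^k * b) = (a' : ℚ) / ((2:ℚ)^j * b') := by rw [← he1, ← he2]
  rw [div_eq_div_iff (by exact mul_ne_zero h2k hb0) (by exact mul_ne_zero h2j hb'0)] at hq
  have hqz : ((a * (2^j * b') : ℤ) : ℚ) = ((a' * (2^k * b) : ℤ) : ℚ) := by push_cast; linarith [hq]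
  have hz : a * (2^j * b') = a' * (2^k * b) := by exact_mod_cast hqz
  set d : ℕ := j - k with hd
  have hjd : j = k + d := by omega
  rw [hjd, pow_add] at hz
  have hz2 : (2:ℤ)^k * (a * (2^d * b')) = 2^k * (a' * b) := by ring_nf; ring_nf at hz; linarith [hz]
  have hz3 : a * (2^d * b') = a' * b := mul_left_cancel₀ (by positivity) hz2
  have heven : Even (a * (2^d * b')) := by
    have h2d : (2:ℤ)^d = 2 * 2^(d-1) := by rw [← pow_succ']; congr 1; omega
    exact ⟨a * (2^(d-1) * b'), by rw [h2d]; ring⟩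
  rw [hz3] at heven
  rcases Int.even_mul.1 heven with h1 | h1
  · exact (Int.not_odd_iff_even.2 h1) ha'
  · exact (Int.not_odd_iff_even.2 h1) hb

private lemma den_cast_ne (q : ℚ) : ((q.den:ℚ)) ≠ 0 := by exact_mod_cast q.den_ne_zero

private lemma mul_den_eq_num' (q : ℚ) : q * (q.den:ℚ) = (q.num:ℚ) := by
  nth_rewrite 1 [← Rat.num_div_den q]
  exact div_mul_cancel₀ _ (den_cast_ne q)

private lemma good_even {q : ℚ} (hden : Odd q.den) (hnum : Even q.num) :
    Odd ((q/2).den) := by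
  rcases hnum with ⟨c, hc⟩
  refine oddden_of_eq_div (a := c) (b := (q.den:ℤ)) (by exact_mod_cast hden) ?_
  rw [div_eq_div_iff (two_ne_zero) (by exact_mod_cast q.den_ne_zero)]
  push_cast
  rw [mul_den_eq_num']
  push_cast [hc]
  ring

private lemma good_odd {q : ℚ} (hden : Odd q.den) (hnum : Odd q.num) :
    Odd (((3*q+1)/2).den) := by
  have hdz : Odd ((q.den:ℤ)) := by exact_mod_cast hden
  obtain ⟨c, hc⟩ : Even (3 * q.num + q.den) := by
    rcases hnum with ⟨m, hm⟩; rcases hdz with ⟨n, hn⟩; exact ⟨3*m + n + 2, by omega⟩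
  refine oddden_of_eq_div (a := c) (b := (q.den:ℤ)) hdz ?_
  rw [div_eq_div_iff (two_ne_zero) (by push_cast; exact den_cast_ne q)]
  push_cast
  have h1 : (3*q+1) * (q.den:ℚ) = 3 * (q * q.den) + q.den := by ring
  rw [h1, mul_den_eq_num']
  have hq : ((3 * q.num + (q.den:ℤ) : ℤ) : ℚ) = ((c + c : ℤ) : ℚ) := by rw [hc]
  push_cast at hq ⊢
  linarith [hq]

private lemma bad_odd {q : ℚ} (hden : Odd q.den) (hnum : Odd q.num) :
    Pden 1 (q/2) := by
  refine ⟨q.num, (q.den:ℤ), hnum, by exact_mod_cast hden, ?_⟩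
  rw [div_eq_div_iff (two_ne_zero) (by
    have := den_cast_ne q
    positivity)]
  rw [pow_one]
  push_cast
  have : q * (2 * (q.den:ℚ)) = 2 * (q * q.den) := by ring
  rw [this, mul_den_eq_num']
  ring

private lemma bad_even {q : ℚ} (hden : Odd q.den) (hnum : Even q.num) :
    Pden 1 ((3*q+1)/2) := by
  have hdz : Odd ((q.den:ℤ)) := by exact_mod_cast hden
  refine ⟨3*q.num + q.den, (q.den:ℤ), ?_, hdz, ?_⟩
  · rcases hnum with ⟨m, hm⟩; rcases hdz with ⟨n, hn⟩; exact ⟨3*m + n, by omega⟩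
  · rw [div_eq_div_iff (two_ne_zero) (by
      have := den_cast_ne q
      positivity)]
    rw [pow_one]
    push_cast
    have h1 : (3*q+1) * (2 * (q.den:ℚ)) = 2 * (3 * (q * q.den) + q.den) := by ring
    rw [h1, mul_den_eq_num']
    ring

private lemma main_rat (l : ℕ) (hl : 1 ≤ l) (q : ℕ → ℚ) (s : ℕ → Bool)
    (hcyc : q l = q 0)
    (hrec : ∀ i, 1 ≤ i → i ≤ l → q i = if s i then (3 * q (i-1) + 1)/2 else q (i-1)/2) :
    (∀ i ≤ l, Odd (q i).den) ∧
      (∀ i, 1 ≤ i → i ≤ l →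
        q i = if Even (q (i-1)).num then q (i-1) / 2 else (3 * q (i-1) + 1) / 2) := by
  have descent : ∀ j i k, i + j ≤ l → 1 ≤ k → Pden k (q i) → Pden (k + j) (q (i + j)) := by
    intro j
    induction j with
    | zero => intro i k _ _ h; simpa using h
    | succ j ih =>
      intro i k hij hk h
      have h1 : q (i+1) = if s (i+1) then (3 * q i + 1)/2 else q i / 2 := by
        have := hrec (i+1) (by omega) (by omega)
        simpa using this
      have h2 : Pden (k+1) (q (i+1)) := by
        rw [h1]; exact Pden.step hk h (s (i+1))
      have h3 := ih (i+1) (k+1) (by omega) (by omega) h2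
      have he : i + 1 + j = i + (j+1) := by omega
      have he2 : k + 1 + j = k + (j+1) := by omega
      rwa [he, he2] at h3
  have hodd0 : Odd (q 0).den := by
    by_contra h0
    obtain ⟨k, hk, hp⟩ := pden_of_not_odd_den h0
    have h4 := descent l 0 k (by omega) hk hp
    rw [Nat.zero_add, hcyc] at h4
    exact pden_ne (by omega) hp h4
  have key : ∀ i, i ≤ l → Odd (q i).den ∧
      (1 ≤ i → q i = if Even (q (i-1)).num then q (i-1) / 2 else (3 * q (i-1) + 1) / 2) := by
    intro i
    induction i with
    | zero => exact fun _ => ⟨hodd0, by omega⟩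
    | succ i ih =>
      intro hil
      have hoi : Odd (q i).den := (ih (by omega)).1
      have h1 : q (i+1) = if s (i+1) then (3 * q i + 1)/2 else q i / 2 := by
        have := hrec (i+1) (by omega) hil
        simpa using this
      have contra : Pden 1 (q (i+1)) → False := by
        intro hp
        have h5 := descent (l - (i+1)) (i+1) 1 (by omega) (by omega) hp
        have he : i + 1 + (l - (i+1)) = l := by omega
        rw [he, hcyc] at h5
        exact Pden.den_not_odd (by omega) h5 hodd0
      have goal2 : q (i+1) = if Even (q i).num then q i / 2 else (3 * q i + 1) / 2 := by
        by_cases hev : Even (q i).num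
        · rw [if_pos hev]
          cases hs : s (i+1) with
          | false => rw [hs] at h1; simpa using h1
          | true =>
            exfalso
            rw [hs] at h1; simp at h1
            exact contra (h1 ▸ bad_even hoi hev)
        · rw [if_neg hev]
          cases hs : s (i+1) with
          | true => rw [hs] at h1; simpa using h1
          | false =>
            exfalso
            rw [hs] at h1; simp at h1
            exact contra (h1 ▸ bad_odd hoi (Int.not_even_iff_odd.1 hev))
      refine ⟨?_, fun _ => by simpa using goal2⟩
      rw [goal2]
      by_cases hev : Even (q i).num
      · rw [if_pos hev]; exact good_even hoi hev
      · rw [if_neg hev]; exact good_odd hoi (Int.not_even_iff_odd.1 hev)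
  exact ⟨fun i hi => (key i hi).1, fun i h1 h2 => by simpa using (key i h2).2 h1⟩

/-- A sequence `(x 0, x 1, …, x l)` of reals is a rational Collatz cycle of length `l`
if, and only if, it is a pseudo-cycle of length `l` (i.e. `x l = x 0` and each step
applies one of the branches `g₀ y = y/2`, `g₁ y = (3y+1)/2`). -/
theorem ratCollatzCycle_iff_pseudoCycle (l : ℕ) (hl : 1 ≤ l) (x : ℕ → ℝ) :
    (∃ q : ℕ → ℚ, (∀ i ≤ l, Odd (q i).den ∧ x i = (q i : ℝ)) ∧
      (∀ i, 1 ≤ i → i ≤ l → q i = gQ (q (i - 1))) ∧ x l = x 0) ↔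
    (∃ s : ℕ → Bool, x l = x 0 ∧
      ∀ i, 1 ≤ i → i ≤ l →
        x i = if s i then (3 * x (i - 1) + 1) / 2 else x (i - 1) / 2) := by
  constructor
  · rintro ⟨q, hq, hstep, hcyc⟩
    refine ⟨fun i => decide (¬ Even (q (i-1)).num), hcyc, ?_⟩
    intro i h1 h2
    have hxi : x i = (q i : ℝ) := (hq i h2).2
    have hxi1 : x (i-1) = (q (i-1) : ℝ) := (hq (i-1) (by omega)).2
    have hg := hstep i h1 h2
    by_cases hev : Even (q (i-1)).num
    · simp only [hev, not_true, decide_false, if_neg (by simp : ¬ (false = true))]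
      rw [hxi, hxi1, hg]
      unfold gQ
      rw [if_pos hev]
      push_cast
      ring
    · simp only [hev, not_false_iff, decide_true, if_pos rfl]
      rw [hxi, hxi1, hg]
      unfold gQ
      rw [if_neg hev]
      push_cast
      ring
  · rintro ⟨s, hcyc, hstep⟩
    -- affine form at l
    have haff : ∀ i ≤ l, ∃ (m : ℕ) (bq : ℚ), x i = (3:ℝ)^m / 2^i * x 0 + (bq : ℝ) := by
      intro i
      induction i with
      | zero => exact fun _ => ⟨0, 0, by norm_num⟩
      | succ i ih =>
        intro hil
        obtain ⟨m, bq, hi⟩ := ih (by omega)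
        have hx1 := hstep (i+1) (by omega) hil
        simp only [Nat.add_sub_cancel] at hx1
        cases hs : s (i+1) with
        | false =>
          rw [hs] at hx1; simp at hx1
          refine ⟨m, bq / 2, ?_⟩
          rw [hx1, hi]
          push_cast
          ring
        | true =>
          rw [hs] at hx1; simp at hx1
          refine ⟨m + 1, (3 * bq + 1) / 2, ?_⟩
          rw [hx1, hi]
          push_cast
          ring
    obtain ⟨m, bq, hxl⟩ := haff l le_rfl
    set c : ℚ := 1 - (3:ℚ)^m / 2^l with hc
    have hcne : c ≠ 0 := by
      intro h0
      have h32 : (3:ℚ)^m = 2^l := by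
        rw [hc] at h0
        have h2l : ((2:ℚ)^l) ≠ 0 := by positivity
        field_simp at h0
        linarith [h0]
      have h32n : (3:ℕ)^m = 2^l := by exact_mod_cast h32
      have hodd : (3:ℕ)^m % 2 = 1 := Nat.odd_iff.1 (Odd.pow ⟨1, rfl⟩)
      have heven : (2:ℕ)^l % 2 = 0 := Nat.mul_mod_right 2 (2^(l-1)) ▸ by
        rw [← pow_succ']
        have : l - 1 + 1 = l := by omega
        rw [this]
      omega
    have hcR : ((c:ℚ):ℝ) ≠ 0 := by exact_mod_cast hcne
    have hcast : ((c:ℚ):ℝ) = 1 - (3:ℝ)^m / 2^l := by rw [hc]; push_cast; ring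
    have hx0 : x 0 = ((bq / c : ℚ) : ℝ) := by
      have h1 : x 0 = (3:ℝ)^m / 2^l * x 0 + (bq:ℝ) := by rw [← hcyc] at hxl ⊢ <;> exact hxl
      have h2 : x 0 * ((c:ℚ):ℝ) = (bq:ℝ) := by rw [hcast]; linear_combination h1
      push_cast
      rw [eq_div_iff hcR]
      exact h2
    let q : ℕ → ℚ := fun n =>
      Nat.rec (motive := fun _ => ℚ) (bq / c) (fun i qi => if s (i+1) then (3 * qi + 1)/2 else qi / 2) n
    have hq0 : q 0 = bq / c := rfl
    have hqs : ∀ i, q (i+1) = if s (i+1) then (3 * q i + 1)/2 else q i / 2 := fun i => rfl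
    have hx : ∀ i ≤ l, x i = (Rat.cast (q i) : ℝ) := by
      intro i
      induction i with
      | zero => exact fun _ => hx0
      | succ i ih =>
        intro hil
        have hxi := ih (by omega)
        have hx1 := hstep (i+1) (by omega) hil
        simp only [Nat.add_sub_cancel] at hx1
        rw [hqs i]
        cases hs : s (i+1) with
        | false =>
          simp only [hs, Bool.false_eq_true, if_false] at hx1 ⊢
          rw [hx1, hxi]; push_cast; ring
        | true =>
          simp only [hs, if_true] at hx1 ⊢
          rw [hx1, hxi]; push_cast; ring
    have hrec : ∀ i, 1 ≤ i → i ≤ l → q i = if s i then (3 * q (i-1) + 1)/2 else q (i-1)/2 := by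
      intro i h1 _
      cases i with
      | zero => omega
      | succ j => simpa using hqs j
    have hql : q l = q 0 := by
      have : (Rat.cast (q l) : ℝ) = (Rat.cast (q 0) : ℝ) := by
        rw [← hx l le_rfl, ← hx 0 (by omega)]; exact hcyc
      exact_mod_cast this
    obtain ⟨hden, hstep2⟩ := main_rat l hl q s hql hrec
    refine ⟨q, fun i hi => ⟨hden i hi, hx i hi⟩, ?_, hcyc⟩
    intro i h1 h2
    rw [hstep2 i h1 h2]
    unfold gQ
    rfl
end

section
/- Let a be a positive integer and l ≥ 1 with U^l(a) = a (so a starts a U-cycle of length l). Then for every x ∈ ℝ with x ≥ 1, the U-parity sequence 𝒫_U(x) is eventually periodic with period (a mod 2, U(a) mod 2, …, U^{l−1}(a) mod 2) if, and only if, the U-trajectory of x tends to the cycle of a from above, i.e., there exists j₀ ∈ ℕ such that for every j ∈ {0, 1, …, l−1}, the sequence (U^{kl + j + j₀}(x))_{k≥0} converges to U^j(a) and all of its terms are ≥ U^j(a). -/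
noncomputable def Ufac (b : ℤ) : ℝ := if Even b then 1/2 else 3/2
noncomputable def Ucst (b : ℤ) : ℝ := if Even b then 0 else 1/2

lemma Ufac_pos (b : ℤ) : 0 < Ufac b := by unfold Ufac; split <;> norm_num
lemma Ucst_nonneg (b : ℤ) : 0 ≤ Ucst b := by unfold Ucst; split <;> norm_num

lemma U_apply_parity (u : ℝ) (b : ℤ) (hp : ⌊u⌋ % 2 = b % 2) :
    U u = Ufac b * u + Ucst b := by
  have he : Even ⌊u⌋ ↔ Even b := by simp [Int.even_iff, hp]
  unfold U Ufac Ucst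
  by_cases h : Even b
  · rw [if_pos (he.2 h), if_pos h, if_pos h]; ring
  · rw [if_neg (fun h' => h (he.1 h')), if_neg h, if_neg h]; ring

lemma U_one_le {u : ℝ} (hu : 1 ≤ u) : 1 ≤ U u := by
  unfold U
  split_ifs with h
  · have h1 : 1 ≤ ⌊u⌋ := Int.le_floor.2 (by exact_mod_cast hu)
    have h2 : 2 ≤ ⌊u⌋ := by rcases h with ⟨k, hk⟩; omega
    have h3 : (2:ℝ) ≤ u := le_trans (by exact_mod_cast h2) (Int.floor_le u)
    linarith
  · linarith

lemma U_int {b : ℤ} (hb : 1 ≤ b) : ∃ c : ℤ, 1 ≤ c ∧ U (b:ℝ) = (c:ℝ) := by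
  have hfl : ⌊(b:ℝ)⌋ = b := Int.floor_intCast b
  by_cases h : Even b
  · have hU : U (b:ℝ) = (b:ℝ)/2 := by unfold U; rw [hfl, if_pos h]
    obtain ⟨k, hk⟩ := h
    refine ⟨k, by omega, ?_⟩
    rw [hU, hk]; push_cast; ring
  · have hU : U (b:ℝ) = (3*(b:ℝ)+1)/2 := by unfold U; rw [hfl, if_neg h]
    obtain ⟨k, hk⟩ := Int.not_even_iff_odd.1 h
    refine ⟨3*k+2, by omega, ?_⟩
    rw [hU, hk]; push_cast; ring

/-- If `a ∈ ℕ≥1` starts a `U`-cycle of length `l`, then for all `x ≥ 1` the `U`-parity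
sequence of `x` is eventually periodic with period
`(a mod 2, U(a) mod 2, …, U^{l-1}(a) mod 2)` iff the `U`-trajectory of `x`
tends to the cycle of `a` from above. -/
theorem parity_periodic_iff_tendsto_from_above (a : ℕ) (ha : 0 < a) (l : ℕ) (hl : 1 ≤ l)
    (hcyc : U^[l] (a : ℝ) = a) (x : ℝ) (hx : 1 ≤ x) :
    (∃ j : ℕ, ∀ m : ℕ, ∀ i < l,
        ⌊U^[j + m * l + i] x⌋ % 2 = ⌊U^[i] (a : ℝ)⌋ % 2) ↔
    (∃ j₀ : ℕ, ∀ j < l,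
        Filter.Tendsto (fun k : ℕ => U^[k * l + j + j₀] x) Filter.atTop
          (nhds (U^[j] (a : ℝ))) ∧
        ∀ k : ℕ, U^[j] (a : ℝ) ≤ U^[k * l + j + j₀] x) := by
  have hl' : 0 < l := hl
  have hiter : ∀ n : ℕ, ∃ b : ℤ, 1 ≤ b ∧ U^[n] (a:ℝ) = (b:ℝ) := by
    intro n
    induction n with
    | zero => exact ⟨a, by exact_mod_cast ha, by norm_num⟩
    | succ n ih =>
      obtain ⟨b, hb1, hb2⟩ := ih
      obtain ⟨c, hc1, hc2⟩ := U_int hb1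
      exact ⟨c, hc1, by rw [Function.iterate_succ_apply', hb2, hc2]⟩
  choose A hA1 hA2 using hiter
  have hA0 : (A 0 : ℝ) = (a:ℝ) := by simpa using (hA2 0).symm
  have hAfl : ∀ n, ⌊U^[n] (a:ℝ)⌋ = A n := by intro n; rw [hA2 n]; exact Int.floor_intCast _
  have hAstep : ∀ n, (A (n+1) : ℝ) = Ufac (A n) * A n + Ucst (A n) := by
    intro n
    rw [← hA2 (n+1), Function.iterate_succ_apply', hA2 n]
    exact U_apply_parity _ _ (by rw [Int.floor_intCast])
  have hAper : ∀ n, A (n + l) = A n := by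
    intro n
    have h1 : U^[n + l] (a:ℝ) = U^[n] (a:ℝ) := by
      rw [Function.iterate_add_apply, hcyc]
    have h2 := (hA2 (n+l)).symm.trans (h1.trans (hA2 n))
    exact_mod_cast h2
  have hAml : ∀ m i, A (m * l + i) = A i := by
    intro m
    induction m with
    | zero => simp
    | succ m ih =>
      intro i
      have h : (m+1) * l + i = (m*l + i) + l := by ring
      rw [h, hAper, ih]
  set q : ℝ := ∏ i ∈ Finset.range l, Ufac (A i) with hqdef
  have hq0 : 0 < q := Finset.prod_pos (fun i _ => Ufac_pos _)
  have haR : (0:ℝ) < (a:ℝ) := by exact_mod_cast ha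
  have hq1 : q < 1 := by
    have L1 : ∀ n, (∏ i ∈ Finset.range n, Ufac (A i)) * (a:ℝ) ≤ A n := by
      intro n
      induction n with
      | zero => simp [hA0]
      | succ n ih =>
        rw [Finset.prod_range_succ, hAstep n]
        calc (∏ i ∈ Finset.range n, Ufac (A i)) * Ufac (A n) * (a:ℝ)
            = Ufac (A n) * ((∏ i ∈ Finset.range n, Ufac (A i)) * (a:ℝ)) := by ring
          _ ≤ Ufac (A n) * A n := mul_le_mul_of_nonneg_left ih (Ufac_pos _).le
          _ ≤ Ufac (A n) * A n + Ucst (A n) := le_add_of_nonneg_right (Ucst_nonneg _)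
    have hAl : (A l : ℝ) = (a:ℝ) := by
      have h := hAper 0
      rw [Nat.zero_add] at h
      rw [h, hA0]
    by_cases hall : ∀ i < l, Even (A i)
    · have hq : q = (1/2 : ℝ)^l := by
        rw [hqdef]
        rw [Finset.prod_congr rfl (fun i hi => ?_), Finset.prod_const, Finset.card_range]
        unfold Ufac
        rw [if_pos (hall i (Finset.mem_range.1 hi))]
      rw [hq]
      exact pow_lt_one₀ (by norm_num) (by norm_num) (by omega)
    · push_neg at hall
      obtain ⟨i₀, hi₀l, hi₀⟩ := hall
      have L2 : ∀ m, (∏ i ∈ Finset.range (i₀+1+m), Ufac (A i)) * (a:ℝ) < A (i₀+1+m) := by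
        intro m
        induction m with
        | zero =>
          rw [Nat.add_zero, Finset.prod_range_succ, hAstep i₀]
          have hc : Ucst (A i₀) = 1/2 := by unfold Ucst; rw [if_neg hi₀]
          calc (∏ i ∈ Finset.range i₀, Ufac (A i)) * Ufac (A i₀) * (a:ℝ)
              = Ufac (A i₀) * ((∏ i ∈ Finset.range i₀, Ufac (A i)) * (a:ℝ)) := by ring
            _ ≤ Ufac (A i₀) * A i₀ := mul_le_mul_of_nonneg_left (L1 i₀) (Ufac_pos _).le
            _ < Ufac (A i₀) * A i₀ + Ucst (A i₀) := by rw [hc]; linarith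
        | succ m ih =>
          have h : i₀ + 1 + (m+1) = (i₀+1+m) + 1 := by ring
          rw [h, Finset.prod_range_succ, hAstep]
          calc (∏ i ∈ Finset.range (i₀+1+m), Ufac (A i)) * Ufac (A (i₀+1+m)) * (a:ℝ)
              = Ufac (A (i₀+1+m)) * ((∏ i ∈ Finset.range (i₀+1+m), Ufac (A i)) * (a:ℝ)) := by ring
            _ < Ufac (A (i₀+1+m)) * A (i₀+1+m) :=
                (mul_lt_mul_iff_right₀ (Ufac_pos _)).2 ih
            _ ≤ Ufac (A (i₀+1+m)) * A (i₀+1+m) + Ucst (A (i₀+1+m)) :=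
                le_add_of_nonneg_right (Ucst_nonneg _)
      have hmeq : i₀ + 1 + (l - (i₀+1)) = l := by omega
      have h := L2 (l - (i₀+1))
      rw [hmeq] at h
      rw [hAl] at h
      have : q * (a:ℝ) < 1 * (a:ℝ) := by rw [hqdef]; linarith
      exact (mul_lt_mul_iff_left₀ haR).1 this
  constructor
  · rintro ⟨j, H⟩
    set y : ℕ → ℝ := fun n => U^[j + n] x with hydef
    have hallx : ∀ m, 1 ≤ U^[m] x := by
      intro m; induction m with
      | zero => simpa
      | succ m ih => rw [Function.iterate_succ_apply']; exact U_one_le ih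
    have hy1 : ∀ n, 1 ≤ y n := fun n => hallx _
    have hyp : ∀ n, ⌊y n⌋ % 2 = A n % 2 := by
      intro n
      have h1 := H (n / l) (n % l) (Nat.mod_lt _ hl')
      rw [hAfl] at h1
      have hdm : n / l * l + n % l = n := by
        rw [Nat.mul_comm]; exact Nat.div_add_mod n l
      have h2 : j + n / l * l + n % l = j + n := by rw [Nat.add_assoc, hdm]
      rw [h2] at h1
      have h3 : A n = A (n % l) := by
        conv_lhs => rw [← hdm]
        exact hAml _ _
      rw [h3]; exact h1
    set d : ℕ → ℝ := fun n => y n - A n with hddef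
    have hstep : ∀ n, d (n + 1) = Ufac (A n) * d n := by
      intro n
      have hy' : y (n + 1) = U (y n) := by
        have h : j + (n+1) = (j+n) + 1 := by omega
        show U^[j + (n+1)] x = U (U^[j+n] x)
        rw [h, Function.iterate_succ_apply']
      show y (n+1) - (A (n+1) : ℝ) = Ufac (A n) * (y n - A n)
      rw [hy', U_apply_parity (y n) (A n) (hyp n), hAstep n]
      ring
    have hblock : ∀ s n, d (s + n) = (∏ i ∈ Finset.range n, Ufac (A (s + i))) * d s := by
      intro s n
      induction n with
      | zero => simp
      | succ n ih =>
        rw [show s + (n+1) = (s+n)+1 from rfl, hstep, ih, Finset.prod_range_succ]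
        ring
    have hshift : ∀ n, (∏ i ∈ Finset.range l, Ufac (A (n + i))) = q := by
      intro n
      induction n with
      | zero => simp [hqdef]
      | succ n ih =>
        have h1 : (∏ i ∈ Finset.range (l+1), Ufac (A (n + i)))
            = (∏ i ∈ Finset.range l, Ufac (A (n + i))) * Ufac (A (n + l)) :=
          Finset.prod_range_succ _ _
        have h2 : (∏ i ∈ Finset.range (l+1), Ufac (A (n + i)))
            = (∏ i ∈ Finset.range l, Ufac (A (n + (i + 1)))) * Ufac (A (n + 0)) :=
          Finset.prod_range_succ' _ _
        rw [ih, hAper n] at h1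
        have h3 : (∏ i ∈ Finset.range l, Ufac (A (n + (i + 1))))
            = ∏ i ∈ Finset.range l, Ufac (A (n + 1 + i)) :=
          Finset.prod_congr rfl (fun i _ => by rw [show n + (i+1) = n+1+i from by omega])
        rw [h3] at h2
        simp only [Nat.add_zero, add_zero] at h2
        have hne : Ufac (A n) ≠ 0 := (Ufac_pos _).ne'
        have h4 : Ufac (A n) * (∏ i ∈ Finset.range l, Ufac (A (n+1+i))) = Ufac (A n) * q := by
          rw [mul_comm, ← h2, h1, mul_comm]
        exact mul_left_cancel₀ hne h4
    have hpow : ∀ n' m, d (n' + m * l) = q ^ m * d n' := by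
      intro n' m
      induction m with
      | zero => simp
      | succ m ih =>
        rw [show n' + (m+1)*l = (n' + m*l) + l from by ring,
          hblock (n' + m*l) l, hshift (n' + m*l), ih, pow_succ]
        ring
    have hneg1 : ∀ n, d n < 0 → d n < -1 := by
      intro n hn
      have hyn : y n < (A n : ℝ) := by
        have : y n - (A n : ℝ) < 0 := hn
        linarith
      have hfl : ⌊y n⌋ < A n := Int.floor_lt.2 hyn
      have hp := hyp n
      have h2 : ⌊y n⌋ ≤ A n - 2 := by omega
      have h3 : y n < (⌊y n⌋ : ℝ) + 1 := Int.lt_floor_add_one _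
      have h4 : ((⌊y n⌋ : ℝ)) ≤ (A n : ℝ) - 2 := by exact_mod_cast h2
      show y n - (A n : ℝ) < -1
      linarith
    have hd0 : ∀ n, 0 ≤ d n := by
      by_contra hcon
      push_neg at hcon
      obtain ⟨n, hn⟩ := hcon
      obtain ⟨m, hm⟩ := exists_pow_lt_of_lt_one
        (div_pos one_pos (by linarith : (0:ℝ) < -d n)) hq1
      have h1 : q^m * (-d n) < 1 := (lt_div_iff₀ (by linarith : (0:ℝ) < -d n)).1 hm
      have h2 : d (n + m * l) = q^m * d n := hpow n m
      have h3 : d (n + m * l) < 0 := by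
        rw [h2]; exact mul_neg_of_pos_of_neg (pow_pos hq0 m) hn
      have h4 := hneg1 _ h3
      rw [h2] at h4
      nlinarith
    refine ⟨j, fun j' _ => ?_⟩
    have hidx : ∀ k, U^[k * l + j' + j] x = y (j' + k * l) := by
      intro k
      show _ = U^[j + (j' + k*l)] x
      congr 1
      ring
    have hval : ∀ k, y (j' + k * l) = (A j' : ℝ) + q ^ k * d j' := by
      intro k
      have h1 : y (j' + k*l) - (A (j' + k*l) : ℝ) = q^k * (y j' - A j') := hpow j' k
      have hA' : A (j' + k*l) = A j' := by
        rw [show j' + k*l = k*l + j' from by ring]; exact hAml k j'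
      rw [hA'] at h1
      have : (q:ℝ)^k * d j' = q^k * (y j' - A j') := rfl
      rw [this]
      linarith
    constructor
    · rw [hA2 j']
      have hT : Filter.Tendsto (fun k : ℕ => (A j' : ℝ) + q ^ k * d j') Filter.atTop
          (nhds ((A j' : ℝ) + 0 * d j')) :=
        Filter.Tendsto.const_add _
          (Filter.Tendsto.mul_const _ (tendsto_pow_atTop_nhds_zero_of_lt_one hq0.le hq1))
      rw [zero_mul, add_zero] at hT
      refine hT.congr (fun k => ?_)
      rw [hidx k, hval k]
    · intro k
      rw [hA2 j', hidx k, hval k]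
      have h5 : 0 ≤ q^k * d j' := mul_nonneg (pow_nonneg hq0.le k) (hd0 j')
      linarith
  · rintro ⟨j₀, H⟩
    have key : ∀ j, ∃ N : ℕ, j < l → ∀ k ≥ N, ⌊U^[k * l + j + j₀] x⌋ = A j := by
      intro j
      by_cases hj : j < l
      · obtain ⟨hT, hB⟩ := H j hj
        rw [hA2 j] at hT
        have hev : ∀ᶠ k in Filter.atTop, U^[k*l+j+j₀] x < (A j : ℝ) + 1 :=
          hT.eventually_lt_const (lt_add_one _)
        obtain ⟨N, hN⟩ := Filter.eventually_atTop.1 hev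
        refine ⟨N, fun _ k hk => ?_⟩
        have h1 := hB k
        rw [hA2 j] at h1
        have h2 := hN k hk
        rw [Int.floor_eq_iff]
        exact ⟨h1, by linarith⟩
      · exact ⟨0, fun h => absurd h hj⟩
    choose N hN using key
    set M := (Finset.range l).sup N with hM
    refine ⟨M * l + j₀, fun m i hi => ?_⟩
    have hidx : M * l + j₀ + m * l + i = (M + m) * l + i + j₀ := by ring
    rw [hidx, hAfl i,
      hN i hi (M + m) (le_trans (Finset.le_sup (Finset.mem_range.2 hi)) (Nat.le_add_right _ _))]
end

section
/- Let a be a positive integer and l ≥ 1 with U^l(a) = a (so a starts a U-cycle of length l). Then for every x ∈ ℝ with x ≥ 0, the Ũ-parity sequence 𝒫_Ũ(x) is eventually periodic with period (1 − (a mod 2), 1 − (U(a) mod 2), …, 1 − (U^{l−1}(a) mod 2)) if, and only if, the Ũ-trajectory of x tends to the cycle of a from below, i.e., there exists j₀ ∈ ℕ such that for every j ∈ {0, 1, …, l−1}, the sequence (Ũ^{kl + j + j₀}(x))_{k≥0} converges to U^j(a) and all of its terms are ≤ U^j(a). -/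
/-- The flipped 3x+1 function: `Ũx = (3x+1)/2` if `⌊x⌋` is even, `x/2` if `⌊x⌋` is odd. -/
noncomputable def Utilde (x : ℝ) : ℝ := if Even ⌊x⌋ then (3 * x + 1) / 2 else x / 2

noncomputable def rfac (n : ℕ) : ℝ := if Even n then 1/2 else 3/2

lemma rfac_pos (n : ℕ) : 0 < rfac n := by unfold rfac; split <;> norm_num

lemma rfac_cases (n : ℕ) : rfac n = 1/2 ∨ rfac n = 3/2 := by unfold rfac; split <;> simp

lemma even_floor_natCast (n : ℕ) : Even ⌊(n:ℝ)⌋ ↔ Even n := by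
  rw [Int.floor_natCast]; exact Int.even_coe_nat n

lemma U_nat (n : ℕ) (hn : 0 < n) : ∃ m : ℕ, 0 < m ∧ U (n:ℝ) = m := by
  unfold U
  by_cases h : Even n
  · obtain ⟨k, hk⟩ := h
    refine ⟨k, by omega, ?_⟩
    rw [if_pos ((even_floor_natCast n).2 ⟨k, hk⟩)]
    subst hk; push_cast; ring
  · obtain ⟨k, hk⟩ := Nat.not_even_iff_odd.1 h
    refine ⟨3*k+2, by omega, ?_⟩
    rw [if_neg (by rw [even_floor_natCast]; exact h)]
    subst hk; push_cast; ring

lemma not_even_of_par {m : ℤ} {n : ℕ} (hpar : m % 2 = 1 - (n:ℤ) % 2) (h : Even n) :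
    ¬ Even m := by
  have : (n:ℤ) % 2 = 0 := Int.even_iff.1 (by exact_mod_cast h)
  rw [Int.even_iff]; omega

lemma even_of_par {m : ℤ} {n : ℕ} (hpar : m % 2 = 1 - (n:ℤ) % 2) (h : ¬ Even n) :
    Even m := by
  have : (n:ℤ) % 2 = 1 := Int.odd_iff.1 (by exact_mod_cast Nat.not_even_iff_odd.1 h)
  rw [Int.even_iff]; omega

lemma step_eq (y : ℝ) (n : ℕ) (hpar : ⌊y⌋ % 2 = 1 - (n:ℤ) % 2) :
    Utilde y - U (n:ℝ) = rfac n * (y - n) := by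
  unfold Utilde U rfac
  by_cases h : Even n
  · rw [if_neg (not_even_of_par hpar h), if_pos ((even_floor_natCast n).2 h), if_pos h]; ring
  · rw [if_pos (even_of_par hpar h), if_neg (by rw [even_floor_natCast]; exact h), if_neg h]; ring

lemma U_ge (n : ℕ) : rfac n * n ≤ U (n:ℝ) := by
  unfold U rfac
  by_cases h : Even n
  · rw [if_pos h, if_pos ((even_floor_natCast n).2 h)]; linarith
  · rw [if_neg h, if_neg (by rw [even_floor_natCast]; exact h)]
    nlinarith [Nat.cast_nonneg (α := ℝ) n]

/-- After hitting anything of the form odd/2^s (s ≥ 1), Utilde keeps this form. -/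
lemma dyadic_step (y : ℝ) (p : ℤ) (s : ℕ) (hs : 1 ≤ s) (hp : p % 2 = 1) (hy : y = p / 2^s) :
    ∃ q : ℤ, q % 2 = 1 ∧ Utilde y = q / 2^(s+1) := by
  have h2s : (2:ℝ)^s ≠ 0 := by positivity
  have h2s1 : (2:ℝ)^(s+1) ≠ 0 := by positivity
  unfold Utilde
  by_cases h : Even ⌊y⌋
  · refine ⟨3*p + 2^s, ?_, ?_⟩
    · have h2 : (2:ℤ) ∣ 2^s := dvd_pow_self 2 (by omega)
      omega
    · rw [if_pos h, hy, div_eq_div_iff (by norm_num) (by positivity)]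
      push_cast
      rw [pow_succ]
      field_simp
  · refine ⟨p, hp, ?_⟩
    rw [if_neg h, hy, div_eq_div_iff (by norm_num) (by positivity)]
    push_cast
    rw [pow_succ]
    field_simp

/-- Utilde of an integer has the form odd/2. -/
lemma int_step (y : ℝ) (n : ℤ) (hy : y = n) : ∃ q : ℤ, q % 2 = 1 ∧ Utilde y = q / 2^1 := by
  unfold Utilde
  by_cases h : Even ⌊y⌋
  · have hn : Even n := by rwa [hy, Int.floor_intCast] at h
    rw [Int.even_iff] at hn
    refine ⟨3*n+1, by omega, by rw [if_pos h, hy]; push_cast; ring⟩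
  · have hn : ¬ Even n := by rwa [hy, Int.floor_intCast] at h
    rw [Int.even_iff] at hn
    refine ⟨n, by omega, by rw [if_neg h, hy]; push_cast; ring⟩

lemma dyadic_not_int (p : ℤ) (hp : p % 2 = 1) (s : ℕ) (hs : 1 ≤ s) (n : ℤ) :
    (p:ℝ) / 2^s ≠ n := by
  intro h
  have h2 : (p:ℝ) = n * 2^s := by field_simp at h; linarith
  have h3 : p = n * 2^s := by exact_mod_cast h2
  have h4 : (2:ℤ) ∣ 2^s := dvd_pow_self 2 (by omega)
  have h5 : (2:ℤ) ∣ p := h3 ▸ Dvd.dvd.mul_left h4 n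
  omega

/-- Once the trajectory hits an integer, all strictly later iterates are non-integers. -/
lemma after_int (x : ℝ) (m : ℕ) (n : ℤ) (hm : Utilde^[m] x = n) :
    ∀ d, 1 ≤ d → ∀ n' : ℤ, Utilde^[m + d] x ≠ n' := by
  have key : ∀ d, 1 ≤ d → ∃ q : ℤ, ∃ s : ℕ, 1 ≤ s ∧ q % 2 = 1 ∧ Utilde^[m + d] x = q / 2^s := by
    intro d hd
    induction d with
    | zero => omega
    | succ d ih =>
      rcases Nat.lt_or_ge 1 (d+1) with h1 | h1
      · obtain ⟨q, s, hs, hq, hq2⟩ := ih (by omega)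
        obtain ⟨q', hq', hq2'⟩ := dyadic_step _ q s hs hq hq2
        exact ⟨q', s+1, by omega, hq', by
          rw [show m + (d+1) = (m+d)+1 from rfl, Function.iterate_succ_apply', hq2']⟩
      · have hd0 : d = 0 := by omega
        subst hd0
        obtain ⟨q, hq, hq2⟩ := int_step _ n hm
        exact ⟨q, 1, le_refl _, hq, by
          rw [show m + 1 = m + 1 from rfl, Function.iterate_succ_apply', hq2]⟩
  intro d hd n'
  obtain ⟨q, s, hs, hq, hq2⟩ := key d hd
  rw [hq2]; exact dyadic_not_int q hq s hs n'


/-- If `a ∈ ℕ≥1` starts a `U`-cycle of length `l`, then for all `x ≥ 0` the `Ũ`-parity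
sequence of `x` is eventually periodic with period
`(1 − a mod 2, 1 − U(a) mod 2, …, 1 − U^{l-1}(a) mod 2)` iff the `Ũ`-trajectory of `x`
tends to the cycle of `a` from below. -/
theorem parity_periodic_iff_tendsto_from_below (a : ℕ) (ha : 0 < a) (l : ℕ) (hl : 1 ≤ l)
    (hcyc : U^[l] (a : ℝ) = a) (x : ℝ) (hx : 0 ≤ x) :
    (∃ j : ℕ, ∀ m : ℕ, ∀ i < l,
        ⌊Utilde^[j + m * l + i] x⌋ % 2 = 1 - ⌊U^[i] (a : ℝ)⌋ % 2) ↔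
    (∃ j₀ : ℕ, ∀ j < l,
        Filter.Tendsto (fun k : ℕ => Utilde^[k * l + j + j₀] x) Filter.atTop
          (nhds (U^[j] (a : ℝ))) ∧
        ∀ k : ℕ, Utilde^[k * l + j + j₀] x ≤ U^[j] (a : ℝ)) := by
  -- periodicity of the U-iterates at a
  have hper : ∀ i, U^[i + l] (a:ℝ) = U^[i] (a:ℝ) := by
    intro i
    rw [Function.iterate_add_apply, hcyc]
  have hmod : ∀ i, U^[i] (a:ℝ) = U^[i % l] (a:ℝ) := by
    intro i
    induction i using Nat.strong_induction_on with
    | _ i ih =>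
      rcases Nat.lt_or_ge i l with h | h
      · rw [Nat.mod_eq_of_lt h]
      · have h1 : i = (i - l) + l := by omega
        rw [h1, hper, ih (i - l) (by omega), Nat.add_mod_right]
  -- the cycle consists of positive integers
  have hNex : ∀ i, ∃ n : ℕ, 0 < n ∧ U^[i] (a:ℝ) = n := by
    intro i
    induction i with
    | zero => exact ⟨a, ha, rfl⟩
    | succ i ih =>
      obtain ⟨n, hn, he⟩ := ih
      obtain ⟨m, hm, hm2⟩ := U_nat n hn
      exact ⟨m, hm, by rw [Function.iterate_succ_apply', he, hm2]⟩
  choose N hNpos hNeq using hNex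
  have hNper : ∀ i, N (i + l) = N i := by
    intro i
    have := hper i
    rw [hNeq, hNeq] at this
    exact_mod_cast this
  have hNmod : ∀ i, N i = N (i % l) := by
    intro i
    have := hmod i
    rw [hNeq, hNeq] at this
    exact_mod_cast this
  set r : ℕ → ℝ := fun i => rfac (N i) with hr
  have hrpos : ∀ i, 0 < r i := fun i => rfac_pos (N i)
  have hrper : ∀ i, r (i + l) = r i := fun i => by rw [hr]; simp only []; rw [hNper]
  set C : ℝ := ∏ t ∈ Finset.range l, r t with hC
  have hCpos : 0 < C := Finset.prod_pos (fun t _ => hrpos t)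
  obtain ⟨l', rfl⟩ : ∃ l', l = l' + 1 := ⟨l - 1, by omega⟩
  have hstep1 : ∀ i, ∏ t ∈ Finset.range (l'+1), r ((i+1) + t)
      = ∏ t ∈ Finset.range (l'+1), r (i + t) := by
    intro i
    rw [Finset.prod_range_succ]
    rw [show (fun t => r (i + t)) = fun t => r (i + t) from rfl]
    rw [Finset.prod_range_succ' (fun t => r (i + t)) l']
    have h1 : r (i + 1 + l') = r (i + 0) := by
      rw [show i + 1 + l' = i + (l' + 1) from by ring, hrper, Nat.add_zero]
    rw [h1]
    congr 1
    apply Finset.prod_congr rfl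
    intro t _
    rw [show i + 1 + t = i + (t + 1) from by ring]
  have hshift : ∀ i, ∏ t ∈ Finset.range (l'+1), r (i + t) = C := by
    intro i
    induction i with
    | zero => simp [hC]
    | succ i ih => rw [hstep1 i, ih]
  have hgrow : ∀ k, (∏ t ∈ Finset.range k, r t) * (a:ℝ) ≤ U^[k] (a:ℝ) := by
    intro k
    induction k with
    | zero => simp
    | succ k ih =>
      rw [Function.iterate_succ_apply', Finset.prod_range_succ, hNeq k]
      calc (∏ t ∈ Finset.range k, r t) * r k * (a:ℝ)
          = r k * ((∏ t ∈ Finset.range k, r t) * a) := by ring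
        _ ≤ r k * (N k : ℝ) := by
            apply mul_le_mul_of_nonneg_left _ (hrpos k).le
            rwa [← hNeq k]
        _ ≤ U ((N k : ℕ) : ℝ) := U_ge (N k)
  have hCle : C ≤ 1 := by
    have h1 := hgrow (l'+1)
    rw [hcyc] at h1
    have ha' : (0:ℝ) < a := by exact_mod_cast ha
    nlinarith
  have hCpow : ∃ k : ℕ, C * 2^(l'+1) = 3^k := by
    have : ∀ m : ℕ, ∃ k : ℕ, (∏ t ∈ Finset.range m, r t) * 2^m = (3:ℝ)^k := by
      intro m
      induction m with
      | zero => exact ⟨0, by simp⟩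
      | succ m ih =>
        obtain ⟨k, hk⟩ := ih
        rcases rfac_cases (N m) with h | h
        · refine ⟨k, ?_⟩
          rw [Finset.prod_range_succ, pow_succ]
          have : r m = 1/2 := h
          rw [this, ← hk]; ring
        · refine ⟨k+1, ?_⟩
          rw [Finset.prod_range_succ, pow_succ, pow_succ]
          have : r m = 3/2 := h
          rw [this, ← hk]; ring
    exact this (l'+1)
  have hCne : C ≠ 1 := by
    intro h
    obtain ⟨k, hk⟩ := hCpow
    rw [h, one_mul] at hk
    have h2 : (2:ℕ)^(l'+1) = 3^k := by exact_mod_cast hk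
    have h3 : 2 ∣ (2:ℕ)^(l'+1) := dvd_pow_self 2 (by omega)
    have h4 : (3:ℕ)^k % 2 = 1 := by
      rw [Nat.pow_mod]; norm_num
    omega
  have hClt : C < 1 := lt_of_le_of_ne hCle hCne
  constructor
  · rintro ⟨j, hj⟩
    have hpar' : ∀ i, ⌊Utilde^[j + i] x⌋ % 2 = 1 - (N i : ℤ) % 2 := by
      intro i
      have h1 := hj (i / (l'+1)) (i % (l'+1)) (Nat.mod_lt _ (by omega))
      rw [hNeq (i % (l'+1)), Int.floor_natCast] at h1
      rw [show j + i / (l'+1) * (l'+1) + i % (l'+1) = j + i from by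
        rw [Nat.add_assoc, Nat.div_add_mod']] at h1
      rw [h1, hNmod i]
    set e : ℕ → ℝ := fun i => Utilde^[j + i] x - U^[i] (a:ℝ) with hE
    have estep' : ∀ i, e (i+1) = r i * e i := by
      intro i
      have h2 := step_eq (Utilde^[j + i] x) (N i) (hpar' i)
      show Utilde^[j + (i+1)] x - U^[i+1] (a:ℝ) = r i * (Utilde^[j + i] x - U^[i] (a:ℝ))
      rw [show j + (i+1) = (j+i) + 1 from by ring, Function.iterate_succ_apply',
        Function.iterate_succ_apply', hNeq i]
      exact h2
    have echain : ∀ i k, e (i + k) = (∏ t ∈ Finset.range k, r (i + t)) * e i := by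
      intro i k
      induction k with
      | zero => simp
      | succ k ih =>
        rw [show i + (k+1) = (i + k) + 1 from rfl, estep' (i+k), ih,
          Finset.prod_range_succ]
        ring
    have eper : ∀ i, e (i + (l'+1)) = C * e i := fun i => by rw [echain, hshift]
    have eiter : ∀ i m, e (m * (l'+1) + i) = C^m * e i := by
      intro i m
      induction m with
      | zero => simp
      | succ m ih =>
        rw [show (m+1) * (l'+1) + i = (m * (l'+1) + i) + (l'+1) from by ring,
          eper, ih, pow_succ]
        ring
    have esign : ∀ i, e i < 0 := by
      intro i
      by_contra h
      push_neg at h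
      have h0 : Filter.Tendsto (fun m : ℕ => C^m * e i) Filter.atTop (nhds 0) := by
        have := (tendsto_pow_atTop_nhds_zero_of_lt_one hCpos.le hClt).mul_const (e i)
        simpa using this
      have h1 : ∀ᶠ m : ℕ in Filter.atTop, C^m * e i < 1 :=
        h0.eventually_lt_const (by norm_num)
      obtain ⟨m, hm⟩ := h1.exists
      have h2 : 0 ≤ C^m * e i := mul_nonneg (pow_nonneg hCpos.le m) h
      have h3 : Utilde^[j + (m * (l'+1) + i)] x
          = (N (m * (l'+1) + i) : ℝ) + C^m * e i := by
        have h4 : Utilde^[j + (m * (l'+1) + i)] x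
            = U^[m * (l'+1) + i] (a:ℝ) + e (m * (l'+1) + i) := by
          simp [hE]
        rw [h4, hNeq (m * (l'+1) + i), eiter i m]
      have hfl : ⌊Utilde^[j + (m * (l'+1) + i)] x⌋ = (N (m * (l'+1) + i) : ℤ) := by
        rw [h3, Int.floor_eq_iff]
        constructor
        · push_cast; linarith
        · push_cast; linarith
      have h5 := hpar' (m * (l'+1) + i)
      rw [hfl] at h5
      omega
    refine ⟨j, fun j' hj' => ?_⟩
    have hfun : ∀ k : ℕ, Utilde^[k * (l'+1) + j' + j] x = U^[j'] (a:ℝ) + C^k * e j' := by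
      intro k
      rw [show k * (l'+1) + j' + j = j + (k * (l'+1) + j') from by ring]
      have h2 : Utilde^[j + (k * (l'+1) + j')] x
          = U^[k * (l'+1) + j'] (a:ℝ) + e (k * (l'+1) + j') := by simp [hE]
      rw [h2, eiter j' k, hmod (k * (l'+1) + j'),
        show k * (l'+1) + j' = (l'+1) * k + j' from by ring, Nat.mul_add_mod,
        Nat.mod_eq_of_lt hj']
    constructor
    · rw [show (fun k : ℕ => Utilde^[k * (l'+1) + j' + j] x)
          = fun k => U^[j'] (a:ℝ) + C^k * e j' from funext hfun]
      have h0 : Filter.Tendsto (fun k : ℕ => C^k * e j') Filter.atTop (nhds 0) := by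
        simpa using (tendsto_pow_atTop_nhds_zero_of_lt_one hCpos.le hClt).mul_const (e j')
      simpa using h0.const_add (U^[j'] (a:ℝ))
    · intro k
      rw [hfun k]
      have h6 : C^k * e j' ≤ 0 := (mul_neg_of_pos_of_neg (pow_pos hCpos k) (esign j')).le
      linarith
  · rintro ⟨j₀, hj₀⟩
    have hnonint : ∃ m0 : ℕ, ∀ m, m0 ≤ m → ∀ n : ℤ, Utilde^[m] x ≠ n := by
      by_cases hint : ∃ m : ℕ, ∃ n : ℤ, Utilde^[m] x = n
      · obtain ⟨m, n, hm⟩ := hint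
        refine ⟨m + 1, fun m' hm' n' => ?_⟩
        have h1 : m + (m' - m) = m' := by omega
        have h2 := after_int x m n hm (m' - m) (by omega) n'
        rwa [h1] at h2
      · push_neg at hint
        exact ⟨0, fun m _ n => hint m n⟩
    obtain ⟨m0, hm0⟩ := hnonint
    have hKex : ∀ i, i < l'+1 → ∃ K : ℕ, ∀ k, K ≤ k →
        U^[i] (a:ℝ) - 1 < Utilde^[k * (l'+1) + i + j₀] x := by
      intro i hi
      have h1 := (hj₀ i hi).1
      have h2 : ∀ᶠ k : ℕ in Filter.atTop,
          U^[i] (a:ℝ) - 1 < Utilde^[k * (l'+1) + i + j₀] x :=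
        h1.eventually_const_lt (by linarith)
      exact Filter.eventually_atTop.1 h2
    choose! K hK using hKex
    refine ⟨(max ((Finset.range (l'+1)).sup K) m0) * (l'+1) + j₀, fun m i hi => ?_⟩
    set Kt : ℕ := max ((Finset.range (l'+1)).sup K) m0 with hKt
    have hidx : Kt * (l'+1) + j₀ + m * (l'+1) + i = (Kt + m) * (l'+1) + i + j₀ := by ring
    rw [hidx]
    set k := Kt + m with hk
    set y := Utilde^[k * (l'+1) + i + j₀] x with hy
    have hKk : K i ≤ k :=
      le_trans (le_trans (Finset.le_sup (Finset.mem_range.2 hi)) (le_max_left _ _))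
        (Nat.le_add_right _ _)
    have hlow : U^[i] (a:ℝ) - 1 < y := hK i hi k hKk
    have hup : y ≤ U^[i] (a:ℝ) := (hj₀ i hi).2 k
    have hm0' : m0 ≤ k * (l'+1) + i + j₀ := by
      calc m0 ≤ Kt := le_max_right _ _
        _ ≤ Kt * (l'+1) := Nat.le_mul_of_pos_right _ (by omega)
        _ ≤ k * (l'+1) := Nat.mul_le_mul_right _ (by omega)
        _ ≤ k * (l'+1) + i + j₀ := by omega
    have hne : y ≠ (N i : ℝ) := by
      intro h
      exact hm0 _ hm0' ((N i : ℕ) : ℤ) (by rw [hy] at h; exact_mod_cast h)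
    have hlt : y < (N i : ℝ) := lt_of_le_of_ne (by rw [← hNeq i]; exact hup) hne
    have hfl : ⌊y⌋ = (N i : ℤ) - 1 := by
      rw [Int.floor_eq_iff]
      rw [hNeq i] at hlow
      constructor
      · push_cast; linarith
      · push_cast; linarith
    rw [hNeq i, Int.floor_natCast, hfl]
    omega
end

section
/- For every k ∈ ℕ with k ≥ 1, every real solution x ≥ 1 of the equation U^k(x) = x is a rational number. Consequently, every U-cycle starts at a rational number. -/
/-!
Every branch of `U` is an affine map `y ↦ 3^e y / 2 + e / 2` with rational coefficients, so
`U^[k]` agrees at `x` with an affine map `y ↦ (3^a / 2^k) y + c` with `c ∈ ℚ`. For `k ≥ 1` its slope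
is not `1`, since `3^a` is odd and `2^k` is even, so its unique fixed point `x` is rational.
-/

theorem exists_iterate_U_eq_affine (k : ℕ) (x : ℝ) :
    ∃ (a : ℕ) (c : ℚ), U^[k] x = ((3 ^ a / 2 ^ k : ℚ) : ℝ) * x + c := by
  induction k with
  | zero => exact ⟨0, 0, by simp⟩
  | succ n ih =>
    obtain ⟨a, c, h⟩ := ih
    rw [Function.iterate_succ_apply', h, U]
    split_ifs
    · exact ⟨a, c / 2, by push_cast; ring⟩
    · exact ⟨a + 1, (3 * c + 1) / 2, by push_cast; ring⟩

theorem three_pow_ne_two_pow {a k : ℕ} (hk : k ≠ 0) : (3 : ℚ) ^ a ≠ 2 ^ k := by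
  intro h
  have h2 : Even ((3 : ℕ) ^ a) := by
    rw [show (3 : ℕ) ^ a = 2 ^ k by exact_mod_cast h]
    exact (Nat.even_pow' hk).mpr even_two
  exact Nat.not_even_iff_odd.mpr (Odd.pow (by decide)) h2

theorem exists_rat_eq_of_isFixedPt_affine {m c : ℚ} (hm : m ≠ 1) {x : ℝ}
    (hx : Function.IsFixedPt (fun y : ℝ => m * y + c) x) : ∃ q : ℚ, x = q := by
  have hm' : (1 - m : ℝ) ≠ 0 := sub_ne_zero.mpr (by exact_mod_cast hm.symm)
  refine ⟨c / (1 - m), ?_⟩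
  push_cast
  rw [eq_div_iff hm']
  linarith [hx.eq]

theorem U_cycle_starts_rational_general (k : ℕ) (hk : 1 ≤ k) (x : ℝ)
    (hcyc : U^[k] x = x) : ∃ q : ℚ, x = (q : ℝ) := by
  obtain ⟨a, c, hU⟩ := exists_iterate_U_eq_affine k x
  have hslope : (3 ^ a / 2 ^ k : ℚ) ≠ 1 :=
    div_ne_one_of_ne (three_pow_ne_two_pow (by omega))
  exact exists_rat_eq_of_isFixedPt_affine hslope (hU ▸ hcyc)

/-- Every real solution `x ≥ 1` of `U^[k] x = x` (for `k ≥ 1`) is rational;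
hence every `U`-cycle starts at a rational number. -/
theorem U_cycle_starts_rational (k : ℕ) (hk : 1 ≤ k) (x : ℝ) (hx : 1 ≤ x)
    (hcyc : U^[k] x = x) : ∃ q : ℚ, x = (q : ℝ) :=
  U_cycle_starts_rational_general k hk x hcyc
end

section
/- Let a be a positive integer and l ≥ 1 with U^l(a) = a. Then for every real θ with 0 < θ < (2/3)^l, every y ∈ [a, a+θ), every m ∈ ℕ, and every i ∈ {0, 1, …, l−1}, one has ⌊U^{ml + i}(y)⌋ = U^i(a). -/
/-!
On a strip `[b, b + (2/3)^j)` above a natural number `b`, all points have the same floors as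
`b` during `j` steps of `U`, so `U^[j]` is affine there with slope at most `(3/2)^j` and
nonnegative intercept, and it sends `b` to a natural number. Since `U^[l]` fixes `a > 0`, its
slope there is at most `1`, so `U^[l]` maps `[a, a + θ)` into itself; after `i < l` further
steps the strip has grown by a factor at most `(3/2)^i < (3/2)^l`, which keeps it inside a
unit interval above `U^[i] a`.
-/

open Set

lemma U_of_mem_Ico_natCast {b : ℕ} {x : ℝ} (hx : x ∈ Ico (b : ℝ) (b + 1)) :
    U x = if Even b then x / 2 else (3 * x + 1) / 2 := by
  have hfloor : ⌊x⌋ = b := Int.floor_eq_on_Ico (b : ℤ) x (by exact_mod_cast hx)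
  simp only [U, hfloor, Int.even_coe_nat]

lemma exists_U_affine_near_natCast (b : ℕ) :
    ∃ (b' : ℕ) (p q : ℝ), 0 < p ∧ p ≤ 3 / 2 ∧ 0 ≤ q ∧ (b' : ℝ) = p * b + q ∧
      ∀ x ∈ Ico (b : ℝ) (b + 1), U x = p * x + q := by
  obtain ⟨k, rfl | rfl⟩ := Nat.even_or_odd' b
  · refine ⟨k, 1 / 2, 0, by norm_num, by norm_num, le_rfl, by push_cast; ring, fun x hx => ?_⟩
    rw [U_of_mem_Ico_natCast hx, if_pos (even_two_mul k)]
    ring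
  · refine ⟨3 * k + 2, 3 / 2, 1 / 2, by norm_num, le_rfl, by norm_num, by push_cast; ring,
      fun x hx => ?_⟩
    rw [U_of_mem_Ico_natCast hx, if_neg (Nat.not_even_iff_odd.mpr (odd_two_mul_add_one k))]
    ring

lemma exists_iterate_U_natCast (j b : ℕ) : ∃ c : ℕ, U^[j] b = c := by
  induction j generalizing b with
  | zero => exact ⟨b, rfl⟩
  | succ j ih =>
    obtain ⟨b', p, q, -, -, -, hb', hU⟩ := exists_U_affine_near_natCast b
    rw [Function.iterate_succ_apply, hU b (by simp), ← hb']
    exact ih b'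

lemma exists_iterate_U_affine_near_natCast (j b : ℕ) :
    ∃ P Q : ℝ, 0 < P ∧ P ≤ (3 / 2) ^ j ∧ 0 ≤ Q ∧
      ∀ x ∈ Ico (b : ℝ) (b + (2 / 3) ^ j), U^[j] x = P * x + Q := by
  induction j generalizing b with
  | zero => exact ⟨1, 0, one_pos, by simp, le_rfl, fun x _ => by simp⟩
  | succ j ih =>
    obtain ⟨b', p, q, hp, hp32, hq, hb', hU⟩ := exists_U_affine_near_natCast b
    obtain ⟨P, Q, hP, hP32, hQ, hUj⟩ := ih b'
    refine ⟨P * p, P * q + Q, by positivity, ?_, by positivity, fun x ⟨hbx, hxb⟩ => ?_⟩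
    · rw [pow_succ]
      exact mul_le_mul hP32 hp32 hp.le (by positivity)
    have hsmall : (2 / 3 : ℝ) ^ (j + 1) ≤ 1 := pow_le_one₀ (by norm_num) (by norm_num)
    have hstep : p * (x - b) < (2 / 3) ^ j :=
      calc p * (x - b) ≤ 3 / 2 * (x - b) := by gcongr
        _ < 3 / 2 * (2 / 3) ^ (j + 1) := by gcongr; linarith
        _ = (2 / 3) ^ j := by rw [pow_succ]; ring
    have hUx : U x ∈ Ico (b' : ℝ) (b' + (2 / 3) ^ j) := by
      rw [hU x ⟨hbx, by linarith⟩, hb']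
      constructor <;> nlinarith
    rw [Function.iterate_succ_apply, hUj _ hUx, hU x ⟨hbx, by linarith⟩]
    ring

lemma floor_iterate_U_of_mem_Ico {b : ℕ} {j : ℕ} {x : ℝ}
    (hx : x ∈ Ico (b : ℝ) (b + (2 / 3) ^ j)) : (⌊U^[j] x⌋ : ℝ) = U^[j] b := by
  obtain ⟨P, Q, hP, hP32, -, hUj⟩ := exists_iterate_U_affine_near_natCast j b
  obtain ⟨c, hc⟩ := exists_iterate_U_natCast j b
  have hUb : U^[j] b = P * b + Q := hUj b (by simp)
  have hgrowth : P * (x - b) < 1 :=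
    calc P * (x - b) ≤ (3 / 2) ^ j * (x - b) := by gcongr; linarith [hx.1]
      _ < (3 / 2) ^ j * (2 / 3) ^ j := by gcongr; linarith [hx.2]
      _ = 1 := by rw [← mul_pow]; norm_num
  have hfloor : ⌊U^[j] x⌋ = c := by
    rw [Int.floor_eq_iff, hUj x hx]
    push_cast
    constructor <;> nlinarith [hx.1]
  rw [hfloor, hc]
  norm_cast

lemma mapsTo_iterate_U_of_cycle {a l : ℕ} (ha : 0 < a) (hcyc : U^[l] (a : ℝ) = a) {θ : ℝ}
    (hθ : θ ≤ (2 / 3) ^ l) : MapsTo U^[l] (Ico (a : ℝ) (a + θ)) (Ico (a : ℝ) (a + θ)) := by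
  obtain ⟨P, Q, hP, -, hQ, hUl⟩ := exists_iterate_U_affine_near_natCast l a
  have hfix : (a : ℝ) = P * a + Q := by rw [← hUl a (by simp), hcyc]
  have hP1 : P ≤ 1 := by
    by_contra! h
    have : (0 : ℝ) < a := by exact_mod_cast ha
    nlinarith
  intro x ⟨hax, hxa⟩
  rw [hUl x ⟨hax, by linarith⟩]
  constructor <;> nlinarith

theorem floors_follow_cycle_general (a : ℕ) (ha : 0 < a) (l : ℕ)
    (hcyc : U^[l] (a : ℝ) = a) (θ : ℝ) (hθ : θ < (2 / 3 : ℝ) ^ l)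
    (y : ℝ) (hy1 : (a : ℝ) ≤ y) (hy2 : y < a + θ) (m : ℕ) (i : ℕ) (hi : i < l) :
    (⌊U^[m * l + i] y⌋ : ℝ) = U^[i] (a : ℝ) := by
  have hcycles : U^[m * l] y ∈ Ico (a : ℝ) (a + θ) := by
    rw [mul_comm, Function.iterate_mul]
    exact (mapsTo_iterate_U_of_cycle ha hcyc hθ.le).iterate m ⟨hy1, hy2⟩
  have hθi : θ ≤ (2 / 3 : ℝ) ^ i :=
    hθ.le.trans (pow_le_pow_of_le_one (by norm_num) (by norm_num) hi.le)
  rw [add_comm, Function.iterate_add_apply]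
  exact floor_iterate_U_of_mem_Ico ⟨hcycles.1, by linarith [hcycles.2]⟩

/-- If `a ∈ ℕ≥1` starts a `U`-cycle of length `l`, then for any `0 < θ < (2/3)^l` and any
`y ∈ [a, a+θ)`, the floors along the trajectory of `y` follow the cycle of `a`. -/
theorem floors_follow_cycle (a : ℕ) (ha : 0 < a) (l : ℕ) (hl : 1 ≤ l)
    (hcyc : U^[l] (a : ℝ) = a) (θ : ℝ) (hθ0 : 0 < θ) (hθ : θ < (2 / 3 : ℝ) ^ l)
    (y : ℝ) (hy1 : (a : ℝ) ≤ y) (hy2 : y < a + θ) (m : ℕ) (i : ℕ) (hi : i < l) :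
    (⌊U^[m * l + i] y⌋ : ℝ) = U^[i] (a : ℝ) :=
  floors_follow_cycle_general a ha l hcyc θ hθ y hy1 hy2 m i hi
end

section
/- For every x ∈ ℝ with x ≥ 1: the U-parity sequence 𝒫_U(x) is eventually periodic with period (0, 1) if, and only if, the U-trajectory of x tends to {1, 2}, i.e., {lim_{k→∞} U^{2k}(x), lim_{k→∞} U^{2k+1}(x)} = {1, 2}. -/
open Filter Topology Function

theorem tendsto_of_sub_eq_mul_sub {z : ℕ → ℝ} {q a : ℝ} (hq : |q| < 1)
    (h : ∀ m, z (m + 1) - a = q * (z m - a)) : Tendsto z atTop (𝓝 a) := by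
  have hz : ∀ m, z m - a = q ^ m * (z 0 - a) := by
    intro m
    induction m with
    | zero => simp
    | succ m ih => rw [h, ih]; ring
  rw [← tendsto_sub_nhds_zero_iff]
  have hpow := (tendsto_pow_atTop_nhds_zero_of_abs_lt_one hq).mul_const (z 0 - a)
  rw [zero_mul] at hpow
  exact hpow.congr fun m => (hz m).symm

theorem tendsto_add_two_mul_iff_mod_two {α : Type*} {f : ℕ → α} {l : Filter α} (c : ℕ) :
    Tendsto (fun m => f (c + 2 * m)) atTop l ↔ Tendsto (fun m => f (c % 2 + 2 * m)) atTop l := by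
  rw [← tendsto_add_atTop_iff_nat (f := fun m => f (c % 2 + 2 * m)) (c / 2)]
  refine Iff.of_eq (congrArg (Tendsto · atTop l) (funext fun m => congrArg f ?_))
  omega

theorem exists_tendsto_even_odd_pair_iff {α : Type*} [TopologicalSpace α] {f : ℕ → α}
    {a b : α} :
    (∃ L₀ L₁ : α, Tendsto (fun k => f (2 * k)) atTop (𝓝 L₀) ∧
        Tendsto (fun k => f (2 * k + 1)) atTop (𝓝 L₁) ∧ ({L₀, L₁} : Set α) = {a, b}) ↔
      ∃ c : ℕ, Tendsto (fun m => f (c + 2 * m)) atTop (𝓝 a) ∧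
        Tendsto (fun m => f (c + 2 * m + 1)) atTop (𝓝 b) := by
  constructor
  · rintro ⟨L₀, L₁, h₀, h₁, hL⟩
    rcases Set.pair_eq_pair_iff.1 hL with ⟨rfl, rfl⟩ | ⟨rfl, rfl⟩
    · exact ⟨0, by simpa using h₀, by simpa using h₁⟩
    · refine ⟨1, by simpa [add_comm] using h₁, ?_⟩
      exact ((tendsto_add_atTop_iff_nat 1).2 h₀).congr fun m => congrArg f (by ring)
  · rintro ⟨c, ha, hb⟩
    rw [tendsto_add_two_mul_iff_mod_two] at ha
    replace hb := (tendsto_add_two_mul_iff_mod_two (c + 1)).1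
      (hb.congr fun m => congrArg f (add_right_comm c (2 * m) 1))
    rcases Nat.mod_two_eq_zero_or_one c with hc | hc
    · rw [hc] at ha
      rw [Nat.add_mod, hc] at hb
      exact ⟨a, b, by simpa using ha, by simpa [add_comm] using hb, rfl⟩
    · rw [hc] at ha
      rw [Nat.add_mod, hc] at hb
      exact ⟨b, a, by simpa using hb, by simpa [add_comm] using ha, Set.pair_comm b a⟩

theorem U_of_floor_mod_two_eq_zero {y : ℝ} (h : ⌊y⌋ % 2 = 0) : U y = y / 2 :=
  if_pos (Int.even_iff.2 h)

theorem U_of_floor_mod_two_eq_one {y : ℝ} (h : ⌊y⌋ % 2 = 1) : U y = (3 * y + 1) / 2 :=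
  if_neg (Int.not_even_iff.2 h)

theorem U_U_of_floor_mod_two {y : ℝ} (h₀ : ⌊y⌋ % 2 = 0) (h₁ : ⌊U y⌋ % 2 = 1) :
    U (U y) = (3 * y + 2) / 4 := by
  rw [U_of_floor_mod_two_eq_one h₁, U_of_floor_mod_two_eq_zero h₀]
  ring

theorem floor_eq_two_and_floor_U_eq_one {y : ℝ} (hlo : 3 / 2 < y) (hhi : y < 5 / 2)
    (hU : U y < 3 / 2) : ⌊y⌋ = 2 ∧ ⌊U y⌋ = 1 := by
  have hge : 1 ≤ ⌊y⌋ := Int.le_floor.2 (by push_cast; linarith)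
  have hlt : ⌊y⌋ < 3 := Int.floor_lt.2 (by push_cast; linarith)
  have heven : Even ⌊y⌋ := by
    by_contra hodd
    rw [U, if_neg hodd] at hU
    linarith
  have hy : ⌊y⌋ = 2 := by
    rw [Int.even_iff] at heven
    omega
  have h2y : (2 : ℝ) ≤ y := by exact_mod_cast hy ▸ Int.floor_le y
  refine ⟨hy, ?_⟩
  rw [U_of_floor_mod_two_eq_zero (by rw [hy]; rfl), Int.floor_eq_iff]
  constructor <;> push_cast <;> linarith

theorem tendsto_iterate_of_parity_period {x : ℝ} {j : ℕ}
    (hj : ∀ m : ℕ, ⌊U^[j + 2 * m] x⌋ % 2 = 0 ∧ ⌊U^[j + 2 * m + 1] x⌋ % 2 = 1) :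
    Tendsto (fun m => U^[j + 2 * m] x) atTop (𝓝 2) ∧
      Tendsto (fun m => U^[j + 2 * m + 1] x) atTop (𝓝 1) := by
  have hhalf : ∀ m, U^[j + 2 * m + 1] x = U^[j + 2 * m] x / 2 := fun m => by
    rw [iterate_succ_apply', U_of_floor_mod_two_eq_zero (hj m).1]
  have htwo : Tendsto (fun m => U^[j + 2 * m] x) atTop (𝓝 2) := by
    refine tendsto_of_sub_eq_mul_sub (q := 3 / 4) (by norm_num [abs_of_pos]) fun m => ?_
    have hodd := (hj m).2
    rw [iterate_succ_apply'] at hodd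
    rw [show j + 2 * (m + 1) = j + 2 * m + 1 + 1 by ring, iterate_succ_apply',
      iterate_succ_apply', U_U_of_floor_mod_two (hj m).1 hodd]
    ring
  refine ⟨htwo, ?_⟩
  simpa [hhalf] using htwo.div_const 2

theorem parity_period_of_tendsto_iterate {x : ℝ} {c : ℕ}
    (htwo : Tendsto (fun m => U^[c + 2 * m] x) atTop (𝓝 2))
    (hone : Tendsto (fun m => U^[c + 2 * m + 1] x) atTop (𝓝 1)) :
    ∃ j : ℕ, ∀ m : ℕ, ⌊U^[j + 2 * m] x⌋ % 2 = 0 ∧ ⌊U^[j + 2 * m + 1] x⌋ % 2 = 1 := by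
  have hnear_two := htwo.eventually (Ioo_mem_nhds (by norm_num : (3 / 2 : ℝ) < 2)
    (by norm_num : (2 : ℝ) < 5 / 2))
  have hnear_one := hone.eventually (Iio_mem_nhds (by norm_num : (1 : ℝ) < 3 / 2))
  obtain ⟨K, hK⟩ := eventually_atTop.1 (hnear_two.and hnear_one)
  refine ⟨c + 2 * K, fun m => ?_⟩
  obtain ⟨⟨hlo, hhi⟩, hU⟩ := hK (K + m) (Nat.le_add_right K m)
  rw [iterate_succ_apply'] at hU
  obtain ⟨h₀, h₁⟩ := floor_eq_two_and_floor_U_eq_one hlo hhi hU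
  rw [show c + 2 * K + 2 * m = c + 2 * (K + m) by ring, iterate_succ_apply', h₀, h₁]
  decide

theorem parity_period01_iff_tendsto_one_two_general (x : ℝ) :
    (∃ j : ℕ, ∀ m : ℕ,
        ⌊U^[j + 2 * m] x⌋ % 2 = 0 ∧ ⌊U^[j + 2 * m + 1] x⌋ % 2 = 1) ↔
    (∃ L₀ L₁ : ℝ,
        Filter.Tendsto (fun k : ℕ => U^[2 * k] x) Filter.atTop (nhds L₀) ∧
        Filter.Tendsto (fun k : ℕ => U^[2 * k + 1] x) Filter.atTop (nhds L₁) ∧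
        ({L₀, L₁} : Set ℝ) = {1, 2}) := by
  rw [Set.pair_comm (1 : ℝ) 2]
  refine Iff.trans ?_ (exists_tendsto_even_odd_pair_iff (f := fun n => U^[n] x)).symm
  exact ⟨fun ⟨_, hj⟩ => ⟨_, tendsto_iterate_of_parity_period hj⟩,
    fun ⟨_, h₂, h₁⟩ => parity_period_of_tendsto_iterate h₂ h₁⟩

/-- For all `x ≥ 1`, the `U`-parity sequence of `x` is eventually periodic with period
`(0,1)` iff the `U`-trajectory of `x` tends to `{1, 2}`. -/
theorem parity_period01_iff_tendsto_one_two (x : ℝ) (hx : 1 ≤ x) :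
    (∃ j : ℕ, ∀ m : ℕ,
        ⌊U^[j + 2 * m] x⌋ % 2 = 0 ∧ ⌊U^[j + 2 * m + 1] x⌋ % 2 = 1) ↔
    (∃ L₀ L₁ : ℝ,
        Filter.Tendsto (fun k : ℕ => U^[2 * k] x) Filter.atTop (nhds L₀) ∧
        Filter.Tendsto (fun k : ℕ => U^[2 * k + 1] x) Filter.atTop (nhds L₁) ∧
        ({L₀, L₁} : Set ℝ) = {1, 2}) :=
  parity_period01_iff_tendsto_one_two_general x
end

section
/- For every x ∈ ℝ with x ≥ 1: the U-trajectory of x tends to {1, 2} if, and only if, there exists k ∈ ℕ such that U^k(x) ∈ [1, 3). -/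
/-!
On `[1, 3/2)` the map `U` is `y ↦ (3y+1)/2`, which lands in `[2, 3)`, where `U` halves; so
`U ∘ U` is the contraction `y ↦ (3y+1)/4` of `[1, 3/2)` with fixed point `1`, and the trajectory
of such a `y` tends to the cycle `{1, 2}`. Every point of `[2, 3)` enters `[1, 3/2)` in one step,
and every point of `[3/2, 2)` reaches `[2, 3)` by following, for a bounded number of steps, the
orbit of the left limit `2⁻` (`2⁻ ↦ 7/2⁻ ↦ 23/4⁻ ↦ …`), along which `⌊·⌋` is locally constant.
Conversely `1 ≤ U y` whenever `1 ≤ y`, so if the even iterates converge to a limit in `{1, 2}`,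
some iterate lies in `[1, 3)`.
-/

open Filter Topology Set

section TwoCycle

variable {α : Type*} [TopologicalSpace α]

def TrajectoryTendstoPair (f : α → α) (a b x : α) : Prop :=
  ∃ L₀ L₁ : α, Tendsto (fun k : ℕ => f^[2 * k] x) atTop (𝓝 L₀) ∧
    Tendsto (fun k : ℕ => f^[2 * k + 1] x) atTop (𝓝 L₁) ∧ ({L₀, L₁} : Set α) = {a, b}

variable {f : α → α} {a b : α}

theorem TrajectoryTendstoPair.of_apply {x : α} (h : TrajectoryTendstoPair f a b (f x)) :
    TrajectoryTendstoPair f a b x := by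
  obtain ⟨L₀, L₁, h₀, h₁, hL⟩ := h
  refine ⟨L₁, L₀, ?_, h₀, by rw [pair_comm, hL]⟩
  rw [← tendsto_add_atTop_iff_nat 1]
  refine h₁.congr fun k => ?_
  rw [mul_add, mul_one, ← Function.iterate_succ_apply]

theorem TrajectoryTendstoPair.of_iterate {x : α} (n : ℕ)
    (h : TrajectoryTendstoPair f a b (f^[n] x)) : TrajectoryTendstoPair f a b x := by
  induction n generalizing x with
  | zero => exact h
  | succ n ih => exact (ih h).of_apply

end TwoCycle

variable {y : ℝ}

theorem U_eq_of_odd (n : ℤ) (hn : Odd n) (hlo : n ≤ y) (hhi : y < n + 1) :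
    U y = (3 * y + 1) / 2 := by
  have hfloor : ⌊y⌋ = n := Int.floor_eq_iff.mpr ⟨hlo, hhi⟩
  simp [U, hfloor, Int.not_even_iff_odd.mpr hn]

theorem U_eq_of_even (n : ℤ) (hn : Even n) (hlo : n ≤ y) (hhi : y < n + 1) :
    U y = y / 2 := by
  have hfloor : ⌊y⌋ = n := Int.floor_eq_iff.mpr ⟨hlo, hhi⟩
  simp [U, hfloor, hn]

theorem one_le_U (hy : 1 ≤ y) : 1 ≤ U y := by
  by_cases heven : Even ⌊y⌋
  · have : (2 : ℤ) ≤ ⌊y⌋ := by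
      have : (1 : ℤ) ≤ ⌊y⌋ := Int.le_floor.mpr (by exact_mod_cast hy)
      obtain ⟨r, hr⟩ := heven
      omega
    have : (2 : ℝ) ≤ y := Int.le_floor.mp this
    simp only [U, if_pos heven]
    linarith
  · simp only [U, if_neg heven]
    linarith

theorem one_le_iterate_U (hy : 1 ≤ y) (n : ℕ) : 1 ≤ U^[n] y := by
  induction n with
  | zero => exact hy
  | succ n ih => rw [Function.iterate_succ_apply']; exact one_le_U ih

theorem U_iterate_two_of_mem_Ico (hy : y ∈ Ico 1 (3 / 2)) :
    U^[2] y = (3 * y + 1) / 4 := by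
  obtain ⟨hlo, hhi⟩ := hy
  have h₁ : U y = (3 * y + 1) / 2 := U_eq_of_odd 1 odd_one (by simpa) (by push_cast; linarith)
  rw [Function.iterate_succ_apply', Function.iterate_one, h₁,
    U_eq_of_even 2 even_two (by push_cast; linarith) (by push_cast; linarith)]
  ring

theorem mapsTo_U_iterate_two_Ico : MapsTo U^[2] (Ico 1 (3 / 2)) (Ico 1 (3 / 2)) := fun y hy => by
  rw [U_iterate_two_of_mem_Ico hy]
  constructor <;> linarith [hy.1, hy.2]

theorem U_iterate_two_mul_mem_Ico (hy : y ∈ Ico 1 (3 / 2)) (n : ℕ) :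
    U^[2 * n] y ∈ Ico 1 (3 / 2) := by
  rw [Function.iterate_mul]
  exact mapsTo_U_iterate_two_Ico.iterate n hy

theorem U_iterate_two_mul_of_mem_Ico (hy : y ∈ Ico 1 (3 / 2)) (n : ℕ) :
    U^[2 * n] y = 1 + (3 / 4) ^ n * (y - 1) := by
  induction n with
  | zero => simp
  | succ n ih =>
    rw [show 2 * (n + 1) = 2 + 2 * n by ring, Function.iterate_add_apply,
      U_iterate_two_of_mem_Ico (U_iterate_two_mul_mem_Ico hy n), ih]
    ring

theorem trajectoryTendstoPair_U_of_mem_Ico_one (hy : y ∈ Ico 1 (3 / 2)) :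
    TrajectoryTendstoPair U 1 2 y := by
  have heven : Tendsto (fun k : ℕ => U^[2 * k] y) atTop (𝓝 1) := by
    have := ((tendsto_pow_atTop_nhds_zero_of_lt_one (by norm_num : (0 : ℝ) ≤ 3 / 4)
      (by norm_num)).mul_const (y - 1)).const_add 1
    rw [zero_mul, add_zero] at this
    exact this.congr fun k => (U_iterate_two_mul_of_mem_Ico hy k).symm
  refine ⟨1, 2, heven, ?_, rfl⟩
  have hodd := ((heven.const_mul 3).add_const 1).div_const 2
  rw [show (3 * 1 + 1) / 2 = (2 : ℝ) by norm_num] at hodd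
  refine hodd.congr fun k => ?_
  obtain ⟨hlo, hhi⟩ := U_iterate_two_mul_mem_Ico hy k
  rw [Function.iterate_succ_apply', U_eq_of_odd 1 odd_one (by simpa) (by push_cast; linarith)]

theorem trajectoryTendstoPair_U_of_odd {a b : ℝ} (n : ℤ) (hn : Odd n) (hlo : n ≤ y)
    (hhi : y < n + 1)
    (h : TrajectoryTendstoPair U a b ((3 * y + 1) / 2)) : TrajectoryTendstoPair U a b y :=
  .of_apply (by rwa [U_eq_of_odd n hn hlo hhi])

theorem trajectoryTendstoPair_U_of_even {a b : ℝ} (n : ℤ) (hn : Even n) (hlo : n ≤ y)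
    (hhi : y < n + 1)
    (h : TrajectoryTendstoPair U a b (y / 2)) : TrajectoryTendstoPair U a b y :=
  .of_apply (by rwa [U_eq_of_even n hn hlo hhi])

theorem trajectoryTendstoPair_U_of_mem_Ico_two (hy : y ∈ Ico 2 3) :
    TrajectoryTendstoPair U 1 2 y :=
  trajectoryTendstoPair_U_of_even 2 even_two (by exact_mod_cast hy.1)
    (by push_cast; linarith [hy.2])
    (trajectoryTendstoPair_U_of_mem_Ico_one ⟨by linarith [hy.1], by linarith [hy.2]⟩)

theorem trajectoryTendstoPair_U_of_mem_Ico_three_halves (hy : y ∈ Ico (3 / 2) 2) :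
    TrajectoryTendstoPair U 1 2 y := by
  obtain ⟨hlo, hhi⟩ := hy
  -- `U y` crosses `3` at `y = 5/3`, and `U^[3] y = (27y+19)/8` crosses `9` at `y = 53/27`.
  rcases lt_or_ge y (5 / 3) with h₁ | h₁
  · refine trajectoryTendstoPair_U_of_odd 1 (by decide) ?_ ?_ <|
      trajectoryTendstoPair_U_of_mem_Ico_two ⟨?_, ?_⟩
    all_goals (push_cast; linarith)
  rcases lt_or_ge y (53 / 27) with h₂ | h₂
  · refine trajectoryTendstoPair_U_of_odd 1 (by decide) ?_ ?_ <|
      trajectoryTendstoPair_U_of_odd 3 (by decide) ?_ ?_ <|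
      trajectoryTendstoPair_U_of_odd 5 (by decide) ?_ ?_ <|
      trajectoryTendstoPair_U_of_even 8 (by decide) ?_ ?_ <|
      trajectoryTendstoPair_U_of_even 4 (by decide) ?_ ?_ <|
      trajectoryTendstoPair_U_of_mem_Ico_two ⟨?_, ?_⟩
    all_goals (push_cast; linarith)
  · refine trajectoryTendstoPair_U_of_odd 1 (by decide) ?_ ?_ <|
      trajectoryTendstoPair_U_of_odd 3 (by decide) ?_ ?_ <|
      trajectoryTendstoPair_U_of_odd 5 (by decide) ?_ ?_ <|
      trajectoryTendstoPair_U_of_odd 9 (by decide) ?_ ?_ <|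
      trajectoryTendstoPair_U_of_even 14 (by decide) ?_ ?_ <|
      trajectoryTendstoPair_U_of_odd 7 (by decide) ?_ ?_ <|
      trajectoryTendstoPair_U_of_odd 11 (by decide) ?_ ?_ <|
      trajectoryTendstoPair_U_of_odd 17 (by decide) ?_ ?_ <|
      trajectoryTendstoPair_U_of_even 26 (by decide) ?_ ?_ <|
      trajectoryTendstoPair_U_of_odd 13 (by decide) ?_ ?_ <|
      trajectoryTendstoPair_U_of_even 20 (by decide) ?_ ?_ <|
      trajectoryTendstoPair_U_of_even 10 (by decide) ?_ ?_ <|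
      trajectoryTendstoPair_U_of_odd 5 (by decide) ?_ ?_ <|
      trajectoryTendstoPair_U_of_even 8 (by decide) ?_ ?_ <|
      trajectoryTendstoPair_U_of_even 4 (by decide) ?_ ?_ <|
      trajectoryTendstoPair_U_of_mem_Ico_two ⟨?_, ?_⟩
    all_goals (push_cast; linarith)

theorem trajectoryTendstoPair_U_of_mem_Ico (hy : y ∈ Ico 1 3) :
    TrajectoryTendstoPair U 1 2 y := by
  obtain ⟨hlo, hhi⟩ := hy
  rcases lt_or_ge y (3 / 2) with h₁ | h₁
  · exact trajectoryTendstoPair_U_of_mem_Ico_one ⟨hlo, h₁⟩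
  rcases lt_or_ge y 2 with h₂ | h₂
  · exact trajectoryTendstoPair_U_of_mem_Ico_three_halves ⟨h₁, h₂⟩
  · exact trajectoryTendstoPair_U_of_mem_Ico_two ⟨h₂, hhi⟩

/-- For all `x ≥ 1`, the `U`-trajectory of `x` tends to `{1, 2}` iff some iterate of `x`
lands in `[1, 3)`. -/
theorem tendsto_one_two_iff_hits_Ico (x : ℝ) (hx : 1 ≤ x) :
    (∃ L₀ L₁ : ℝ,
        Filter.Tendsto (fun k : ℕ => U^[2 * k] x) Filter.atTop (nhds L₀) ∧
        Filter.Tendsto (fun k : ℕ => U^[2 * k + 1] x) Filter.atTop (nhds L₁) ∧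
        ({L₀, L₁} : Set ℝ) = {1, 2}) ↔
    (∃ k : ℕ, U^[k] x ∈ Set.Ico (1 : ℝ) 3) := by
  refine ⟨fun ⟨L₀, _, h₀, _, hL⟩ => ?_, fun ⟨k, hk⟩ =>
    TrajectoryTendstoPair.of_iterate k (trajectoryTendstoPair_U_of_mem_Ico hk)⟩
  have hL₀ : L₀ < 3 := by
    have : L₀ ∈ ({1, 2} : Set ℝ) := hL ▸ mem_insert L₀ {_}
    rcases this with rfl | rfl <;> norm_num
  obtain ⟨k, hk⟩ := (h₀.eventually_lt_const hL₀).exists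
  exact ⟨2 * k, one_le_iterate_U hx _, hk⟩
end

section
/- Suppose that for every positive integer n and every real ρ > 0 there exists z ∈ (n, n + ρ) such that U^k(z) is never a positive integer for any k ∈ ℕ and the U-trajectory of z tends to {1, 2}. Then the only T-cycle is the trivial cycle: every positive integer n with T^l(n) = n for some l ≥ 1 satisfies n ∈ {1, 2}. -/
/-- The 3n+1 function `T n = n/2` if `n` is even, `(3n+1)/2` if `n` is odd. -/
def T (n : ℕ) : ℕ := if Even n then n / 2 else (3 * n + 1) / 2

/-- The slope of `U` on the unit interval `[m, m + 1)`. -/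
noncomputable def slopeU (m : ℕ) : ℝ := if Even m then 1 / 2 else 3 / 2

lemma slopeU_pos (m : ℕ) : 0 < slopeU m := by
  unfold slopeU; split_ifs <;> norm_num

lemma cast_T (m : ℕ) : (T m : ℝ) = slopeU m * m + if Even m then 0 else 1 / 2 := by
  unfold T slopeU
  split_ifs with hm
  · obtain ⟨t, rfl⟩ := hm
    rw [show (t + t) / 2 = t by omega]; push_cast; ring
  · obtain ⟨t, rfl⟩ := Nat.not_even_iff_odd.mp hm
    rw [show (3 * (2 * t + 1) + 1) / 2 = 3 * t + 2 by omega]; push_cast; ring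

lemma slopeU_mul_le_T (m : ℕ) : slopeU m * m ≤ T m := by
  rw [cast_T]; split_ifs <;> norm_num

lemma U_natCast_add {m : ℕ} {ε : ℝ} (h0 : 0 < ε) (h1 : ε < 1) :
    U (m + ε) = T m + slopeU m * ε := by
  have hfloor : ⌊(m : ℝ) + ε⌋ = m := by
    rw [Int.floor_natCast_add, Int.floor_eq_zero_iff.mpr ⟨h0.le, h1⟩, add_zero]
  simp only [U, hfloor, Int.even_coe_nat, cast_T]
  unfold slopeU
  split_ifs <;> ring

lemma iterate_U_natCast_add {n : ℕ} (hn : 0 < n) {δ : ℝ} (hδ : 0 < δ) (k : ℕ)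
    (hsmall : ∀ i < k, δ * T^[i] n < n) :
    ∃ ε, 0 < ε ∧ ε * n ≤ δ * T^[k] n ∧ U^[k] (n + δ) = T^[k] n + ε := by
  induction k with
  | zero => exact ⟨δ, hδ, le_rfl, rfl⟩
  | succ k ih =>
    obtain ⟨ε, hε0, hεn, hU⟩ := ih fun i hi => hsmall i (by omega)
    have hn' : (0 : ℝ) < n := by exact_mod_cast hn
    have hε1 : ε < 1 := by nlinarith [hsmall k (by omega)]
    refine ⟨slopeU (T^[k] n) * ε, mul_pos (slopeU_pos _) hε0, ?_, ?_⟩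
    · calc slopeU (T^[k] n) * ε * n
          ≤ slopeU (T^[k] n) * (δ * T^[k] n) := by
            rw [mul_assoc]; exact mul_le_mul_of_nonneg_left hεn (slopeU_pos _).le
        _ = δ * (slopeU (T^[k] n) * T^[k] n) := by ring
        _ ≤ δ * T^[k + 1] n := by
            rw [Function.iterate_succ_apply']
            exact mul_le_mul_of_nonneg_left (slopeU_mul_le_T _) hδ.le
    · rw [Function.iterate_succ_apply', hU, U_natCast_add hε0 hε1,
        Function.iterate_succ_apply']

lemma Function.IsPeriodicPt.iterate_le_sup {α : Type*} [SemilatticeSup α] [OrderBot α]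
    {f : α → α} {l : ℕ} {n : α} (hper : Function.IsPeriodicPt f l n) (hl : 0 < l) (i : ℕ) :
    f^[i] n ≤ (Finset.range l).sup fun j => f^[j] n := by
  rw [← hper.iterate_mod_apply]
  exact Finset.le_sup (f := fun j => f^[j] n) (Finset.mem_range.mpr (Nat.mod_lt i hl))

/-- If every interval `(n, n+ρ)` (with `n ∈ ℕ≥1`, `ρ > 0`) contains a point `z` whose
`U`-trajectory never hits a positive integer and tends to `{1, 2}`, then the only
`T`-cycle is the trivial one. -/
theorem OU_from_density
    (h : ∀ n : ℕ, 0 < n → ∀ ρ : ℝ, 0 < ρ → ∃ z : ℝ, (n : ℝ) < z ∧ z < n + ρ ∧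
      (∀ k : ℕ, ¬∃ m : ℕ, 0 < m ∧ U^[k] z = (m : ℝ)) ∧
      (∃ L₀ L₁ : ℝ,
        Filter.Tendsto (fun k : ℕ => U^[2 * k] z) Filter.atTop (nhds L₀) ∧
        Filter.Tendsto (fun k : ℕ => U^[2 * k + 1] z) Filter.atTop (nhds L₁) ∧
        ({L₀, L₁} : Set ℝ) = {1, 2})) :
    ∀ n : ℕ, 0 < n → ∀ l : ℕ, 1 ≤ l → T^[l] n = n → n = 1 ∨ n = 2 := by
  intro n hn l hl hcyc
  have hper : Function.IsPeriodicPt T l n := hcyc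
  set M := (Finset.range l).sup fun j => T^[j] n
  have hM : (0 : ℝ) < M := by exact_mod_cast hn.trans_le (hper.iterate_le_sup hl 0)
  obtain ⟨z, hnz, hzρ, -, L₀, L₁, hL₀, -, hL⟩ := h n hn M⁻¹ (inv_pos.mpr hM)
  have hsmall : ∀ i, (z - n) * T^[i] n < n := fun i => calc
    (z - n) * T^[i] n ≤ (z - n) * M :=
      mul_le_mul_of_nonneg_left (by exact_mod_cast hper.iterate_le_sup hl i) (by linarith)
    _ < (M : ℝ)⁻¹ * M := mul_lt_mul_of_pos_right (by linarith) hM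
    _ ≤ n := by rw [inv_mul_cancel₀ hM.ne']; exact_mod_cast hn
  have hlower : ∀ j, (n : ℝ) ≤ U^[2 * (l * j)] z := fun j => by
    obtain ⟨ε, hε, -, hU⟩ :=
      iterate_U_natCast_add hn (sub_pos.mpr hnz) (2 * (l * j)) fun i _ => hsmall i
    rw [add_sub_cancel] at hU
    rw [hU, ((hper.mul_const j).const_mul 2).eq]
    linarith
  have hnL₀ : (n : ℝ) ≤ L₀ :=
    ge_of_tendsto' (hL₀.comp (Filter.tendsto_id.const_mul_atTop' hl)) hlower
  have hL₀mem : L₀ ∈ ({1, 2} : Set ℝ) := hL ▸ Set.mem_insert L₀ {L₁}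
  have hn2 : (n : ℝ) ≤ 2 := by rcases hL₀mem with rfl | rfl <;> linarith
  have : n ≤ 2 := by exact_mod_cast hn2
  omega
end
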